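/- arXiv:1205.3816 — 3 statements merged into one kernel-verified Lean document; each statement's English description precedes it below -/
import Mathlib

section
/- Let G be a factorizable finite simple graph and X ⊆ V(G) a nonempty set. Then the following are equivalent: (i) X is separating, i.e., for every factor-component H of G, either V(H) ⊆ X or V(H) ∩ X = ∅; (ii) there exist factor-components H1, …, Hk of G (k ≥ 1) such that X is the disjoint union V(H1) ∪ ⋯ ∪ V(Hk); (iii) for every perfect matching M of G, no edge of M joins a vertex of X to a vertex of V(G) ∖ X; (iv) for every perfect matching M of G, M ∩ E(G[X]) is a perfect matching of the induced subgraph G[X]. -/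
open SimpleGraph

variable {V : Type*}

/-- A set of edges is pairwise vertex-disjoint. -/
def DisjointEdges (N : Set (Sym2 V)) : Prop :=
  ∀ e ∈ N, ∀ f ∈ N, e ≠ f → ∀ x : V, x ∈ e → x ∉ f

/-- `M` is a matching of `G`: a set of pairwise vertex-disjoint edges of `G`. -/
def IsMatchingSet (G : SimpleGraph V) (M : Set (Sym2 V)) : Prop :=
  M ⊆ G.edgeSet ∧ DisjointEdges M

/-- `M` is a perfect matching of `G`: a matching covering every vertex. -/
def IsPerfectMatchingSet (G : SimpleGraph V) (M : Set (Sym2 V)) : Prop :=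
  IsMatchingSet G M ∧ ∀ v : V, ∃ e ∈ M, v ∈ e

/-- `M` is a near-perfect matching of `G` whose unique exposed vertex is `v`. -/
def IsNearPerfectMatchingSet (G : SimpleGraph V) (M : Set (Sym2 V)) (v : V) : Prop :=
  IsMatchingSet G M ∧ (∀ e ∈ M, v ∉ e) ∧ ∀ u : V, u ≠ v → ∃ e ∈ M, u ∈ e

/-- The induced subgraph `G[X]` has a perfect matching. -/
def HasPMOn (G : SimpleGraph V) (X : Set V) : Prop :=
  ∃ M : Set (Sym2 V), IsMatchingSet G M ∧ (∀ e ∈ M, ∀ x : V, x ∈ e → x ∈ X) ∧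
    ∀ v ∈ X, ∃ e ∈ M, v ∈ e

/-- `G` is factorizable: it has a perfect matching. -/
def Factorizable (G : SimpleGraph V) : Prop :=
  ∃ M : Set (Sym2 V), IsPerfectMatchingSet G M

/-- `G` is factor-critical: deleting any single vertex leaves a factorizable graph. -/
def FactorCritical (G : SimpleGraph V) : Prop :=
  ∀ v : V, HasPMOn G {v}ᶜ

/-- A walk is `M`-alternating: its edges outside `M` are pairwise vertex-disjoint. -/
def MAlternating (M : Set (Sym2 V)) {G : SimpleGraph V} {u v : V} (p : G.Walk u v) : Prop :=
  ∀ e ∈ p.edges, ∀ f ∈ p.edges, e ∉ M → f ∉ M → e ≠ f → ∀ x : V, x ∈ e → x ∉ f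

/-- An `M`-saturated path: a path with an odd number of edges such that `M ∩ E(P)`
is a perfect matching of `P`. -/
def IsSaturatedPath (M : Set (Sym2 V)) {G : SimpleGraph V} {u v : V} (p : G.Walk u v) : Prop :=
  p.IsPath ∧ Odd p.length ∧ ∀ x ∈ p.support, ∃ e ∈ p.edges, e ∈ M ∧ x ∈ e

/-- An `M`-exposed path: a path with an odd number of edges such that `E(P) \ M`
is a perfect matching of `P`. -/
def IsExposedPath (M : Set (Sym2 V)) {G : SimpleGraph V} {u v : V} (p : G.Walk u v) : Prop :=
  p.IsPath ∧ Odd p.length ∧ ∀ x ∈ p.support, ∃ e ∈ p.edges, e ∉ M ∧ x ∈ e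

/-- An `M`-balanced path from `u` to `v`: an `M`-alternating path with an even number
of edges whose first edge (the one incident with `u`) belongs to `M`; a trivial
one-vertex path is `M`-balanced. -/
def IsBalancedPath (M : Set (Sym2 V)) {G : SimpleGraph V} {u v : V} (p : G.Walk u v) : Prop :=
  p.IsPath ∧ Even p.length ∧ MAlternating M p ∧ ∀ e ∈ p.edges.head?, e ∈ M

/-- An edge of `G` is allowed if it lies in some perfect matching of `G`. -/
def Allowed (G : SimpleGraph V) (e : Sym2 V) : Prop :=
  ∃ M : Set (Sym2 V), IsPerfectMatchingSet G M ∧ e ∈ M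

/-- The spanning subgraph of `G` formed by its allowed edges. -/
def allowedSubgraph (G : SimpleGraph V) : SimpleGraph V where
  Adj u v := G.Adj u v ∧ Allowed G s(u, v)
  symm := by
    constructor
    intro u v h
    refine ⟨h.1.symm, ?_⟩
    rw [Sym2.eq_swap]
    exact h.2
  loopless := ⟨fun v h => G.irrefl h.1⟩

/-- `C` is (the vertex set of) a factor-component of `G`: a connected component of the
spanning subgraph of `G` formed by the allowed edges (the factor-component itself being
the induced subgraph `G[C]`). -/
def IsFactorComponent (G : SimpleGraph V) (C : Set V) : Prop :=
  ∃ c : (allowedSubgraph G).ConnectedComponent, C = c.supp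

/-- `G` is elementary: it is factorizable and has exactly one factor-component. -/
def Elementary (G : SimpleGraph V) : Prop :=
  Factorizable G ∧ (allowedSubgraph G).Connected

/-- `X` is a separating set of `G`. -/
def Separating (G : SimpleGraph V) (X : Set V) : Prop :=
  ∀ C : Set V, IsFactorComponent G C → C ⊆ X ∨ Disjoint C X

/-- The contraction `G[X]/S`: the induced subgraph of `G` on `X` with `S` contracted
to a single vertex (the vertex `none`), deleting loops and parallel edges. -/
def contractOn (G : SimpleGraph V) (X S : Set V) : SimpleGraph (Option ↥(X \ S)) where
  Adj a b :=
    match a, b with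
    | some x, some y => G.Adj x.1 y.1
    | some x, none => ∃ s ∈ S, G.Adj x.1 s
    | none, some y => ∃ s ∈ S, G.Adj y.1 s
    | none, none => False
  symm := by
    constructor
    rintro (_ | x) (_ | y) h
    · exact h.elim
    · exact h
    · exact h
    · exact h.symm
  loopless := by
    constructor
    rintro (_ | x) h
    · exact h.elim
    · exact G.irrefl h

/-- `X` is a critical-inducing set for the factor-component (with vertex set) `C1`:
a separating set containing `C1` such that `G[X]/C1` is factor-critical. -/
def CriticalInducing (G : SimpleGraph V) (C1 X : Set V) : Prop :=
  Separating G X ∧ C1 ⊆ X ∧ FactorCritical (contractOn G X C1)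

/-- `C1 ⊵ C2`: there is a critical-inducing set for `C1` to `C2`. -/
def Yield (G : SimpleGraph V) (C1 C2 : Set V) : Prop :=
  ∃ X : Set V, CriticalInducing G C1 X ∧ C2 ⊆ X

/-- `u ∼ v`: `u = v` or `G - u - v` has no perfect matching. -/
def SimRel (G : SimpleGraph V) (u v : V) : Prop :=
  u = v ∨ ¬ HasPMOn G (({u, v} : Set V)ᶜ)

/-- An `M`-ear relative to the vertex set `X`: a path whose two end vertices lie in `X`
and whose internal vertices do not (or a cycle with exactly one vertex in `X`), such
that the ear minus `X` is an `M`-saturated path. -/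
def IsMEar (G : SimpleGraph V) (M : Set (Sym2 V)) (X : Set V) {u v : V}
    (p : G.Walk u v) : Prop :=
  u ∈ X ∧ v ∈ X ∧ ((∃ h : u = v, (p.copy rfl h.symm).IsCycle) ∨ (u ≠ v ∧ p.IsPath)) ∧
  ∃ (x y : V) (hux : G.Adj u x) (q : G.Walk x y) (hyv : G.Adj y v),
    p = SimpleGraph.Walk.cons hux (q.concat hyv) ∧
    IsSaturatedPath M q ∧ ∀ w ∈ q.support, w ∉ X

/-- An `M`-ear relative to `X` through (the factor-component with vertex set) `C`:
some internal vertex of the ear lies in `C`. -/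
def IsMEarThrough (G : SimpleGraph V) (M : Set (Sym2 V)) (X C : Set V) {u v : V}
    (p : G.Walk u v) : Prop :=
  IsMEar G M X p ∧ ∃ w ∈ p.support, w ∉ X ∧ w ∈ C

/-- An `M`-ear sequence `(H 0, …, H k)` of pairwise distinct factor-components,
where for each `i` there is an `M`-ear relative to `H i` through `H (i+1)`. -/
def IsMEarSequence (G : SimpleGraph V) (M : Set (Sym2 V)) (k : ℕ)
    (H : Fin (k + 1) → Set V) : Prop :=
  (∀ i, IsFactorComponent G (H i)) ∧ Function.Injective H ∧
  ∀ i : Fin k, ∃ (u v : V) (p : G.Walk u v),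
    IsMEarThrough G M (H i.castSucc) (H i.succ) p

/-! All conditions say that no allowed edge leaves `X`. A vertex set of a graph is a union of
connected components exactly when no edge leaves it, and the allowed edges are exactly the edges
of perfect matchings. For (iv), the matching edge at `v ∈ X` is unique, so it lies inside `X`
precisely when it does not leave `X`. -/

namespace SimpleGraph

variable {H : SimpleGraph V} {X : Set V}

theorem forall_supp_subset_or_disjoint_iff :
    (∀ c : H.ConnectedComponent, c.supp ⊆ X ∨ Disjoint c.supp X) ↔
      ∀ u v, H.Adj u v → (u ∈ X ↔ v ∈ X) := by
  constructor
  · intro h u v huv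
    have hv : v ∈ (H.connectedComponentMk u).supp :=
      (ConnectedComponent.connectedComponentMk_eq_of_adj huv).symm
    rcases h (H.connectedComponentMk u) with hsub | hdisj
    · exact iff_of_true (hsub rfl) (hsub hv)
    · exact iff_of_false (Set.disjoint_left.1 hdisj rfl) (Set.disjoint_left.1 hdisj hv)
  · intro h c
    refine or_iff_not_imp_right.2 fun hmeet w hw => ?_
    obtain ⟨u, hu, huX⟩ := Set.not_disjoint_iff.1 hmeet
    obtain ⟨p⟩ := ConnectedComponent.exact (hu.trans hw.symm)
    by_contra hwX
    obtain ⟨d, -, hdX, hdX'⟩ := p.exists_boundary_dart X huX hwX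
    exact hdX' ((h _ _ d.adj).1 hdX)

theorem exists_injective_fin_succ_iUnion_supp_eq [Finite V] (hX : X.Nonempty)
    (h : ∀ c : H.ConnectedComponent, c.supp ⊆ X ∨ Disjoint c.supp X) :
    ∃ (k : ℕ) (c : Fin (k + 1) → H.ConnectedComponent),
      Function.Injective c ∧ X = ⋃ i, (c i).supp := by
  set T : Set H.ConnectedComponent := {c | ¬ Disjoint c.supp X}
  have hT : T.Nonempty := by
    obtain ⟨v, hv⟩ := hX
    exact ⟨H.connectedComponentMk v, Set.not_disjoint_iff.2 ⟨v, rfl, hv⟩⟩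
  have : Finite T := Subtype.finite
  obtain ⟨n, ⟨e⟩⟩ := Finite.exists_equiv_fin T
  obtain ⟨k, rfl⟩ : ∃ k, n = k + 1 :=
    Nat.exists_eq_succ_of_ne_zero (e ⟨_, hT.some_mem⟩).pos.ne'
  refine ⟨k, fun i => (e.symm i).1, Subtype.val_injective.comp e.symm.injective, ?_⟩
  ext v
  simp only [Set.mem_iUnion]
  constructor
  · intro hv
    have hvT : H.connectedComponentMk v ∈ T := Set.not_disjoint_iff.2 ⟨v, rfl, hv⟩
    exact ⟨e ⟨_, hvT⟩, by simp⟩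
  · rintro ⟨i, hi⟩
    exact (h _).resolve_right (e.symm i).2 hi

theorem supp_subset_or_disjoint_iUnion_supp {ι : Type*} (c : ι → H.ConnectedComponent)
    (d : H.ConnectedComponent) :
    d.supp ⊆ ⋃ i, (c i).supp ∨ Disjoint d.supp (⋃ i, (c i).supp) := by
  refine or_iff_not_imp_right.2 fun hmeet => ?_
  obtain ⟨v, hvd, hv⟩ := Set.not_disjoint_iff.1 hmeet
  obtain ⟨i, hvi⟩ := Set.mem_iUnion.1 hv
  have hdi : d = c i := hvd.symm.trans hvi
  exact hdi ▸ Set.subset_iUnion (fun i => (c i).supp) i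

end SimpleGraph

section FactorComponents

variable {G : SimpleGraph V} {X : Set V}

theorem separating_iff_forall_supp :
    Separating G X ↔
      ∀ c : (allowedSubgraph G).ConnectedComponent, c.supp ⊆ X ∨ Disjoint c.supp X :=
  ⟨fun h c => h _ ⟨c, rfl⟩, by rintro h _ ⟨c, rfl⟩; exact h c⟩

theorem allowedSubgraph_adj_iff {u v : V} :
    (allowedSubgraph G).Adj u v ↔ ∃ M, IsPerfectMatchingSet G M ∧ s(u, v) ∈ M :=
  ⟨fun h => h.2, fun ⟨M, hM, he⟩ => ⟨hM.1.1 he, M, hM, he⟩⟩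

theorem separating_iff_exists_iUnion_factorComponents [Finite V] (hX : X.Nonempty) :
    Separating G X ↔ ∃ (k : ℕ) (H : Fin (k + 1) → Set V),
        (∀ i, IsFactorComponent G (H i)) ∧
        (∀ i j, i ≠ j → Disjoint (H i) (H j)) ∧ X = ⋃ i, H i := by
  rw [separating_iff_forall_supp]
  constructor
  · intro h
    obtain ⟨k, c, hc, rfl⟩ := exists_injective_fin_succ_iUnion_supp_eq hX h
    exact ⟨k, fun i => (c i).supp, fun i => ⟨c i, rfl⟩,
      fun i j hij => pairwise_disjoint_supp_connectedComponent _ (hc.ne hij), rfl⟩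
  · rintro ⟨k, H, hH, -, rfl⟩
    choose c hc using hH
    simp only [hc]
    exact supp_subset_or_disjoint_iUnion_supp c

theorem separating_iff_forall_perfectMatching_edge :
    Separating G X ↔ ∀ M : Set (Sym2 V), IsPerfectMatchingSet G M →
        ∀ e ∈ M, (∀ x ∈ e, x ∈ X) ∨ ∀ x ∈ e, x ∉ X := by
  have hmk (u v : V) :
      ((∀ x ∈ s(u, v), x ∈ X) ∨ ∀ x ∈ s(u, v), x ∉ X) ↔ (u ∈ X ↔ v ∈ X) := by
    simp only [Sym2.mem_iff, forall_eq_or_imp, forall_eq]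
    tauto
  rw [separating_iff_forall_supp, forall_supp_subset_or_disjoint_iff]
  constructor
  · intro h M hM e he
    induction e using Sym2.ind with
    | _ u v => exact (hmk u v).2 (h u v (allowedSubgraph_adj_iff.2 ⟨M, hM, he⟩))
  · intro h u v huv
    obtain ⟨M, hM, he⟩ := allowedSubgraph_adj_iff.1 huv
    exact (hmk u v).1 (h M hM _ he)

end FactorComponents

theorem forall_edge_inside_or_outside_iff_forall_covered_inside {M : Set (Sym2 V)} {X : Set V}
    (hdisj : DisjointEdges M) (hcover : ∀ v, ∃ e ∈ M, v ∈ e) :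
    (∀ e ∈ M, (∀ x ∈ e, x ∈ X) ∨ ∀ x ∈ e, x ∉ X) ↔
      ∀ v ∈ X, ∃ e ∈ M, (∀ x ∈ e, x ∈ X) ∧ v ∈ e := by
  constructor
  · intro h v hv
    obtain ⟨e, he, hve⟩ := hcover v
    exact ⟨e, he, (h e he).resolve_right fun hout => hout v hve hv, hve⟩
  · intro h e he
    refine or_iff_not_imp_right.2 fun hmeet => ?_
    push Not at hmeet
    obtain ⟨v, hve, hv⟩ := hmeet
    obtain ⟨f, hf, hfX, hvf⟩ := h v hv
    by_cases hef : e = f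
    · exact hef ▸ hfX
    · exact absurd hvf (hdisj e he f hf hef v hve)

theorem statement_5_general {V : Type*} [Fintype V] (G : SimpleGraph V)
    (X : Set V) (hX : X.Nonempty) :
    (Separating G X ↔ ∃ (k : ℕ) (H : Fin (k + 1) → Set V),
        (∀ i, IsFactorComponent G (H i)) ∧
        (∀ i j, i ≠ j → Disjoint (H i) (H j)) ∧ X = ⋃ i, H i) ∧
    (Separating G X ↔ ∀ M : Set (Sym2 V), IsPerfectMatchingSet G M →
        ∀ e ∈ M, (∀ x ∈ e, x ∈ X) ∨ ∀ x ∈ e, x ∉ X) ∧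
    (Separating G X ↔ ∀ M : Set (Sym2 V), IsPerfectMatchingSet G M →
        ∀ v ∈ X, ∃ e ∈ M, (∀ x ∈ e, x ∈ X) ∧ v ∈ e) := by
  have hiii := separating_iff_forall_perfectMatching_edge (G := G) (X := X)
  refine ⟨separating_iff_exists_iUnion_factorComponents hX, hiii, hiii.trans ?_⟩
  exact forall₂_congr fun M hM =>
    forall_edge_inside_or_outside_iff_forall_covered_inside hM.1.2 hM.2

/-- Let `G` be a factorizable finite simple graph and `X ⊆ V(G)` nonempty.
TFAE: (i) `X` is separating; (ii) `X` is a disjoint union of (vertex sets of)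
factor-components; (iii) for every perfect matching `M`, no edge of `M` joins `X` to its
complement; (iv) for every perfect matching `M`, `M ∩ E(G[X])` is a perfect matching
of `G[X]`. -/
theorem statement_5 {V : Type*} [Fintype V] (G : SimpleGraph V) (hG : Factorizable G)
    (X : Set V) (hX : X.Nonempty) :
    (Separating G X ↔ ∃ (k : ℕ) (H : Fin (k + 1) → Set V),
        (∀ i, IsFactorComponent G (H i)) ∧
        (∀ i j, i ≠ j → Disjoint (H i) (H j)) ∧ X = ⋃ i, H i) ∧
    (Separating G X ↔ ∀ M : Set (Sym2 V), IsPerfectMatchingSet G M →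
        ∀ e ∈ M, (∀ x ∈ e, x ∈ X) ∨ ∀ x ∈ e, x ∉ X) ∧
    (Separating G X ↔ ∀ M : Set (Sym2 V), IsPerfectMatchingSet G M →
        ∀ v ∈ X, ∃ e ∈ M, (∀ x ∈ e, x ∈ X) ∧ v ∈ e) :=
  statement_5_general G X hX
end

section
/- Let G be a factorizable finite simple graph, M a perfect matching of G, X ⊆ V(G) a separating set, and H a factor-component of G with V(H) ∩ X = ∅. Let P be an M-ear relative to X through H, with end vertices u, v ∈ X, and set Y := (V(H) ∪ V(P)) ∖ {u, v}. Then for every x ∈ Y: (i) there exists an internal vertex y of P such that there is an M-balanced path Q from x to y with V(Q) ⊆ Y and V(Q) ∩ V(P) = {y}; and (ii) for one of the end vertices w ∈ {u, v}, the concatenation of Q with the segment of P from y to w is an M-balanced path from x to w all of whose vertices except w lie in Y. -/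
open SimpleGraph

variable {V : Type*}

/-!
The heart of the argument: inside a factor-component any two vertices `x, s` are joined by an
`M`-alternating path of allowed edges starting with an `M`-edge. This goes by induction on `|V|`.
Delete `x` and its partner `x'`, and let `K` be the factor-component of `s` in what remains; it is
closed under every perfect matching containing `xx'`. Take an allowed edge `ab ∈ N` entering `K`
and follow the `M`-`N` alternating cycle through `x`: either it reaches `K`, necessarily after an
even number of steps since `K` is closed under `M`, and we continue inside `K` by induction; or
switching `N` to `M` on the cycle gives a perfect matching containing `xx'` and `ab`, forcing
`a ∈ K`.

For the theorem, join `x ∈ V(H)` in this way to a vertex of `P` in `H` and cut the path at its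
first vertex `y` on the `M`-saturated path `P - X`, which is closed under `M`; this gives the
`M`-balanced path `Q`. Of the two segments of `P` from `y` to its ends, the one leaving `y` along
its `M`-edge has even length, and appending it to `Q` gives (ii).
-/

open Walk

variable {G : SimpleGraph V} {M N : Set (Sym2 V)}

theorem DisjointEdges.eq_of_mem (hM : DisjointEdges M) {e f : Sym2 V} (he : e ∈ M) (hf : f ∈ M)
    {z : V} (hze : z ∈ e) (hzf : z ∈ f) : e = f := by
  by_contra hne
  exact hM e he f hf hne z hze hzf

def MatchingClosed (M : Set (Sym2 V)) (Z : Set V) : Prop :=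
  ∀ ⦃z w : V⦄, s(z, w) ∈ M → z ∈ Z → w ∈ Z

theorem MatchingClosed.mem_of_mem_edge {Z : Set V} (hZ : MatchingClosed M Z) {e : Sym2 V}
    (he : e ∈ M) {w z : V} (hw : w ∈ e) (hwZ : w ∈ Z) (hz : z ∈ e) : z ∈ Z := by
  induction e using Sym2.ind with
  | _ a b =>
    rcases Sym2.mem_iff.mp hw with rfl | rfl <;> rcases Sym2.mem_iff.mp hz with rfl | rfl
    · exact hwZ
    · exact hZ he hwZ
    · exact hZ (Sym2.eq_swap ▸ he) hwZ
    · exact hwZ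

namespace IsPerfectMatchingSet

theorem allowed (hM : IsPerfectMatchingSet G M) {e : Sym2 V} (he : e ∈ M) : Allowed G e :=
  ⟨M, hM, he⟩

variable (hM : IsPerfectMatchingSet G M)

noncomputable def partner (z : V) : V :=
  Sym2.Mem.other (hM.2 z).choose_spec.2

theorem mk_partner_mem (z : V) : s(z, hM.partner z) ∈ M := by
  rw [partner, Sym2.other_spec]
  exact (hM.2 z).choose_spec.1

theorem eq_mk_partner {e : Sym2 V} {z : V} (he : e ∈ M) (hz : z ∈ e) :
    e = s(z, hM.partner z) :=
  hM.1.2.eq_of_mem he (hM.mk_partner_mem z) hz (Sym2.mem_mk_left _ _)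

theorem partner_eq_of_mem {z w : V} (h : s(z, w) ∈ M) : hM.partner z = w := by
  rcases Sym2.eq_iff.mp (hM.eq_mk_partner h (Sym2.mem_mk_left z w)) with ⟨-, h⟩ | ⟨h, rfl⟩
  · exact h.symm
  · exact h.symm

theorem adj_partner (z : V) : G.Adj z (hM.partner z) :=
  G.mem_edgeSet.mp (hM.1.1 (hM.mk_partner_mem z))

theorem partner_ne (z : V) : hM.partner z ≠ z :=
  (hM.adj_partner z).ne'

theorem partner_partner (z : V) : hM.partner (hM.partner z) = z :=
  hM.partner_eq_of_mem (Sym2.eq_swap ▸ hM.mk_partner_mem z)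

theorem matchingClosed_iff {Z : Set V} : MatchingClosed M Z ↔ ∀ z ∈ Z, hM.partner z ∈ Z :=
  ⟨fun h z hz => h (hM.mk_partner_mem z) hz,
    fun h z _ hzw hz => hM.partner_eq_of_mem hzw ▸ h z hz⟩

end IsPerfectMatchingSet

/-! ### Alternating walks -/

namespace SimpleGraph.Walk

/-- `p.Alternates M t`: the edges of `p` lie alternately in `M` and outside `M`, the first one
lying in `M` iff `t`. -/
def Alternates (M : Set (Sym2 V)) : ∀ {u v : V}, G.Walk u v → Bool → Prop
  | _, _, nil, _ => True
  | _, _, @cons _ _ u w _ _ p, t => (s(u, w) ∈ M ↔ t) ∧ p.Alternates M !t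

@[simp] theorem alternates_nil {u : V} {t : Bool} : (nil : G.Walk u u).Alternates M t := trivial

@[simp] theorem alternates_cons {u w v : V} (h : G.Adj u w) (p : G.Walk w v) (t : Bool) :
    (cons h p).Alternates M t ↔ (s(u, w) ∈ M ↔ t) ∧ p.Alternates M !t := Iff.rfl

@[simp] theorem alternates_copy {u v u' v' : V} (p : G.Walk u v) (hu : u = u') (hv : v = v')
    (t : Bool) : (p.copy hu hv).Alternates M t ↔ p.Alternates M t := by
  subst hu hv
  rfl

theorem alternates_append {u v w : V} (p : G.Walk u v) (q : G.Walk v w) (t : Bool) :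
    (p.append q).Alternates M t ↔
      p.Alternates M t ∧ q.Alternates M (t ^^ decide (Odd p.length)) := by
  induction p generalizing t with
  | nil => simp
  | cons h p ih =>
    simp only [cons_append, alternates_cons, ih, length_cons, Nat.odd_add_one, decide_not,
      and_assoc]
    cases t <;> simp

theorem Alternates.append_of_even {u v w : V} {p : G.Walk u v} {q : G.Walk v w} {t : Bool}
    (hp : p.Alternates M t) (heven : Even p.length) (hq : q.Alternates M t) :
    (p.append q).Alternates M t := by
  rw [alternates_append]
  simpa [Nat.not_odd_iff_even.mpr heven] using And.intro hp hq

theorem alternates_concat {u v w : V} (p : G.Walk u v) (h : G.Adj v w) (t : Bool) :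
    (p.concat h).Alternates M t ↔
      p.Alternates M t ∧ (s(v, w) ∈ M ↔ (t ^^ decide (Odd p.length))) := by
  simp [concat_eq_append, alternates_append]

theorem Alternates.reverse {u v : V} {p : G.Walk u v} {t : Bool} (hp : p.Alternates M t) :
    p.reverse.Alternates M (t ^^ decide (Even p.length)) := by
  induction p generalizing t with
  | nil => simp
  | cons h p ih =>
    obtain ⟨hfirst, hp⟩ := hp
    rw [reverse_cons, ← concat_eq_append, alternates_concat]
    refine ⟨?_, ?_⟩
    · convert ih hp using 1
      cases t <;> simp [Nat.even_add_one, ← Nat.not_odd_iff_even]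
    · rw [Sym2.eq_swap, hfirst]
      cases t <;> simp [Nat.even_add_one]

theorem Alternates.map {W : Type*} {H : SimpleGraph W} {M' : Set (Sym2 W)} (f : G →g H)
    (hf : ∀ a b : V, s(f a, f b) ∈ M' ↔ s(a, b) ∈ M) :
    ∀ {u v : V} {p : G.Walk u v} {t : Bool}, p.Alternates M t → (p.map f).Alternates M' t
  | _, _, nil, _, _ => trivial
  | _, _, cons _ _, _, hp => ⟨(hf _ _).trans hp.1, hp.2.map f hf⟩

theorem IsPath.append_of_support_inter {u v w : V} {p : G.Walk u v} {q : G.Walk v w}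
    (hp : p.IsPath) (hq : q.IsPath) (h : ∀ z ∈ p.support, z ∈ q.support → z = v) :
    (p.append q).IsPath := by
  refine IsPath.mk' ?_
  rw [support_append]
  refine hp.support_nodup.append (q.support.tail_sublist.nodup hq.support_nodup) ?_
  intro z hzp hzq
  obtain rfl := h z hzp (List.mem_of_mem_tail hzq)
  have hnd := hq.support_nodup
  rw [← cons_tail_support] at hnd
  exact (List.nodup_cons.mp hnd).1 hzq

theorem IsPath.eq_of_start_mem {u w v : V} {h : G.Adj u w} {p : G.Walk w v}
    (hp : (cons h p).IsPath) {e : Sym2 V} (he : e ∈ (cons h p).edges) (hue : u ∈ e) :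
    e = s(u, w) := by
  rcases List.mem_cons.mp he with rfl | he
  · rfl
  · exact absurd (mem_support_of_mem_edges he hue) ((cons_isPath_iff h p).mp hp).2

theorem Alternates.head_mem {u v : V} {p : G.Walk u v} (hp : p.Alternates M true) :
    ∀ e ∈ p.edges.head?, e ∈ M := by
  cases p with
  | nil => simp
  | cons h q => simpa using hp.1

theorem Alternates.mAlternating : ∀ {u v : V} {p : G.Walk u v} {t : Bool},
    p.IsPath → p.Alternates M t → MAlternating M p
  | _, _, nil, _, _, _ => by simp [MAlternating]
  | _, _, @cons _ _ a c _ h q, t, hp, halt => by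
    obtain ⟨hfirst, hq⟩ := halt
    have hqp : q.IsPath := hp.of_cons
    have ih := hq.mAlternating hqp
    -- an edge of `q` meeting `ac` is the first edge of `q`, which lies in `M` when `ac ∉ M`
    have key : s(a, c) ∉ M → ∀ f ∈ q.edges, f ∉ M → ∀ z ∈ s(a, c), z ∉ f := by
      intro hacM f hf hfM z hz hzf
      rcases Sym2.mem_iff.mp hz with rfl | rfl
      · exact ((cons_isPath_iff h q).mp hp).2 (mem_support_of_mem_edges hf hzf)
      · cases q with
        | nil => simp at hf
        | cons h' q' =>
          obtain rfl : t = false := by simpa [hacM] using hfirst.symm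
          exact hfM (hqp.eq_of_start_mem hf hzf ▸ hq.1.mpr rfl)
    intro e he f hf heM hfM hef z hze hzf
    rcases List.mem_cons.mp he with rfl | he <;> rcases List.mem_cons.mp hf with rfl | hf
    · exact hef rfl
    · exact key heM f hf hfM z hze hzf
    · exact key hfM e he heM z hzf hze
    · exact ih e he f hf heM hfM hef z hze hzf

theorem Alternates.isBalancedPath {u v : V} {p : G.Walk u v} (halt : p.Alternates M true)
    (hp : p.IsPath) (heven : Even p.length) : IsBalancedPath M p :=
  ⟨hp, heven, halt.mAlternating hp, halt.head_mem⟩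

theorem IsPath.exists_alternating_prefix {K : Set V} (hK : MatchingClosed M K) :
    ∀ {a z : V} {R : G.Walk a z}, R.IsPath → R.Alternates M true → z ∈ K →
      ∃ y ∈ K, ∃ Q : G.Walk a y, Q.IsPath ∧ Q.Alternates M true ∧ Even Q.length ∧
        Q.support ⊆ R.support ∧ ∀ w ∈ Q.support, w ∈ K → w = y
  | a, _, Walk.nil, _, _, haK =>
    ⟨a, haK, Walk.nil, .nil, trivial, ⟨0, rfl⟩, by simp, by simp⟩
  | a, _, cons h Walk.nil, _, halt, hzK =>
    have haK : a ∈ K := hK (Sym2.eq_swap ▸ halt.1.mpr rfl) hzK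
    ⟨a, haK, Walk.nil, .nil, trivial, ⟨0, rfl⟩, by simp, by simp⟩
  | a, _, @cons _ _ _ c _ h (@cons _ _ _ d _ h' R), hR, halt, hzK => by
    by_cases haK : a ∈ K
    · exact ⟨a, haK, Walk.nil, .nil, trivial, ⟨0, rfl⟩, by simp, by simp⟩
    -- `R` leaves `a` along the `M`-edge `ac`, so `c ∉ K` as `K` is closed under `M`
    have hcK : c ∉ K := fun hcK => haK (hK (Sym2.eq_swap ▸ halt.1.mpr rfl) hcK)
    have hR' : (cons h' R).IsPath := hR.of_cons
    have ha : a ∉ (cons h' R).support := ((cons_isPath_iff _ _).mp hR).2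
    have hc : c ∉ R.support := ((cons_isPath_iff _ _).mp hR').2
    obtain ⟨y, hyK, Q, hQ, hQalt, hQeven, hQR, hQK⟩ :=
      hR'.of_cons.exists_alternating_prefix hK halt.2.2 hzK
    refine ⟨y, hyK, cons h (cons h' Q), ?_, ⟨halt.1, halt.2.1, hQalt⟩, ?_, ?_, ?_⟩
    · refine (hQ.cons fun hcQ => hc (hQR hcQ)).cons ?_
      simp only [support_cons, List.mem_cons, not_or] at ha ⊢
      exact ⟨ha.1, fun haQ => ha.2 (hQR haQ)⟩
    · simpa [Nat.even_add_one] using hQeven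
    · simp only [support_cons, List.cons_subset, List.mem_cons, true_or, or_true, true_and]
      exact fun w hw => List.mem_cons_of_mem a (List.mem_cons_of_mem c (hQR hw))
    · simp only [support_cons, List.mem_cons]
      rintro w (rfl | rfl | hw) hwK
      · exact absurd hwK haK
      · exact absurd hwK hcK
      · exact hQK w hw hwK

end SimpleGraph.Walk

theorem IsSaturatedPath.alternates (hM : DisjointEdges M) :
    ∀ {u v : V} {q : G.Walk u v}, IsSaturatedPath M q → q.Alternates M true
  | _, _, nil, _ => trivial
  | _, _, @cons _ _ a c _ h nil, ⟨hp, _, hcov⟩ => by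
    obtain ⟨e, he, heM, hae⟩ := hcov a (start_mem_support _)
    simpa [hp.eq_of_start_mem he hae] using heM
  | _, _, @cons _ _ a c _ h (@cons _ _ _ d _ h' q), ⟨hp, hodd, hcov⟩ => by
    obtain ⟨e, he, heM, hae⟩ := hcov a (start_mem_support _)
    rw [hp.eq_of_start_mem he hae] at heM
    have hp' : (cons h' q).IsPath := hp.of_cons
    have ha : a ∉ (cons h' q).support := ((cons_isPath_iff _ _).mp hp).2
    have hc : c ∉ q.support := ((cons_isPath_iff _ _).mp hp').2
    have hcd : s(c, d) ∉ M := fun hcdM => by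
      have := hM.eq_of_mem heM hcdM (Sym2.mem_mk_right a c) (Sym2.mem_mk_left c d)
      rcases Sym2.eq_iff.mp this with ⟨-, rfl⟩ | ⟨rfl, -⟩
      · exact h'.ne rfl
      · exact ha (by simp)
    refine ⟨by simpa using heM, by simpa using hcd, IsSaturatedPath.alternates hM ⟨hp'.of_cons,
      by simpa [Nat.odd_add_one] using hodd, fun z hz => ?_⟩⟩
    obtain ⟨f, hf, hfM, hzf⟩ := hcov z (by simp [hz])
    refine ⟨f, ?_, hfM, hzf⟩
    rcases List.mem_cons.mp hf with rfl | hf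
    · rcases Sym2.mem_iff.mp hzf with rfl | rfl
      · exact absurd (by simp [hz]) ha
      · exact absurd hz hc
    rcases List.mem_cons.mp hf with rfl | hf
    · exact absurd hfM hcd
    · exact hf

theorem IsSaturatedPath.matchingClosed (hM : DisjointEdges M) {u v : V} {q : G.Walk u v}
    (hq : IsSaturatedPath M q) : MatchingClosed M {z | z ∈ q.support} := by
  intro z w hzw hz
  obtain ⟨e, he, heM, hze⟩ := hq.2.2 z hz
  exact mem_support_of_mem_edges he
    (hM.eq_of_mem hzw heM (Sym2.mem_mk_left z w) hze ▸ Sym2.mem_mk_right z w)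

/-! ### Perfect matchings of `G - x - x'` -/

theorem DisjointEdges.matchingClosed_compl_pair (hM : DisjointEdges M) {x x' : V}
    (h : s(x, x') ∈ M) : MatchingClosed M {x, x'}ᶜ := by
  intro z w hzw hz hw
  have hw' : w ∈ s(x, x') := by simpa using hw
  have := hM.eq_of_mem hzw h (Sym2.mem_mk_right z w) hw'
  have hz' : z ∈ s(x, x') := this ▸ Sym2.mem_mk_left z w
  exact hz (by simpa using hz')

theorem IsPerfectMatchingSet.induce (hM : IsPerfectMatchingSet G M) {S : Set V}
    (hS : MatchingClosed M S) : IsPerfectMatchingSet (G.induce S) (Sym2.map (↑) ⁻¹' M) := by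
  refine ⟨⟨fun e he => ?_, fun e he f hf hef z hze hzf => ?_⟩, fun z => ?_⟩
  · induction e using Sym2.ind with
    | _ a b => exact G.mem_edgeSet.mp (hM.1.1 he)
  · exact hM.1.2 _ he _ hf (fun h => hef (Sym2.map.injective Subtype.val_injective h)) z
      (Sym2.mem_map.mpr ⟨z, hze, rfl⟩) (Sym2.mem_map.mpr ⟨z, hzf, rfl⟩)
  · exact ⟨s(z, ⟨hM.partner z, hS (hM.mk_partner_mem z) z.2⟩), hM.mk_partner_mem z,
      Sym2.mem_mk_left _ _⟩

theorem IsPerfectMatchingSet.of_induce_compl_pair {x x' : V} (hadj : G.Adj x x')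
    {N : Set (Sym2 ↥({x, x'}ᶜ : Set V))} (hN : IsPerfectMatchingSet (G.induce {x, x'}ᶜ) N) :
    IsPerfectMatchingSet G (insert s(x, x') (Sym2.map (↑) '' N)) := by
  have hout : ∀ e ∈ N, ∀ w ∈ Sym2.map (↑) e, w ∉ s(x, x') := by
    intro e _ w hw hwx
    obtain ⟨z, -, rfl⟩ := Sym2.mem_map.mp hw
    exact z.2 (by simpa using hwx)
  refine ⟨⟨?_, ?_⟩, fun w => ?_⟩
  · rintro _ (rfl | ⟨e, he, rfl⟩)
    · exact hadj
    · induction e using Sym2.ind with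
      | _ a b => exact hN.1.1 he
  · rintro _ (rfl | ⟨e, he, rfl⟩) _ (rfl | ⟨f, hf, rfl⟩) hef z hze hzf
    · exact hef rfl
    · exact hout f hf z hzf hze
    · exact hout e he z hze hzf
    · obtain ⟨z, hz, rfl⟩ := Sym2.mem_map.mp hze
      obtain ⟨z', hz', hzz'⟩ := Sym2.mem_map.mp hzf
      obtain rfl := Subtype.val_injective hzz'
      exact hN.1.2 e he f hf (fun h => hef (h ▸ rfl)) z' hz hz'
  · by_cases hw : w ∈ ({x, x'} : Set V)
    · exact ⟨s(x, x'), Set.mem_insert _ _, by simpa using hw⟩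
    · obtain ⟨e, he, hwe⟩ := hN.2 ⟨w, hw⟩
      exact ⟨_, Set.mem_insert_of_mem _ ⟨e, he, rfl⟩, Sym2.mem_map.mpr ⟨_, hwe, rfl⟩⟩

theorem Allowed.of_induce_compl_pair {x x' : V} (hadj : G.Adj x x')
    {e : Sym2 ↥({x, x'}ᶜ : Set V)} (he : Allowed (G.induce {x, x'}ᶜ) e) :
    Allowed G (e.map (↑)) := by
  obtain ⟨N, hN, heN⟩ := he
  exact ⟨_, hN.of_induce_compl_pair hadj, Set.mem_insert_of_mem _ ⟨e, heN, rfl⟩⟩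

theorem IsPerfectMatchingSet.allowedSubgraph_induce_compl_pair_adj
    (hN : IsPerfectMatchingSet G N) {x x' : V} (hxx' : s(x, x') ∈ N)
    {a b : ↥({x, x'}ᶜ : Set V)} (hab : s(a.1, b.1) ∈ N) :
    (allowedSubgraph (G.induce {x, x'}ᶜ)).Adj a b :=
  have hN' := hN.induce (hN.1.2.matchingClosed_compl_pair hxx')
  ⟨G.mem_edgeSet.mp (hN.1.1 hab), hN'.allowed hab⟩

theorem IsPerfectMatchingSet.matchingClosed_allowedSubgraph_induce_compl_pair
    (hN : IsPerfectMatchingSet G N) {x x' s : V} (hxx' : s(x, x') ∈ N)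
    (hs : s ∈ ({x, x'}ᶜ : Set V)) :
    MatchingClosed N {b | ∃ hb : b ∈ ({x, x'}ᶜ : Set V),
      (allowedSubgraph (G.induce {x, x'}ᶜ)).Reachable ⟨b, hb⟩ ⟨s, hs⟩} := by
  rintro z w hzw ⟨hz, hzs⟩
  have hw : w ∈ ({x, x'}ᶜ : Set V) := hN.1.2.matchingClosed_compl_pair hxx' hzw hz
  exact ⟨hw, (hN.allowedSubgraph_induce_compl_pair_adj hxx' (a := ⟨w, hw⟩) (b := ⟨z, hz⟩)
    (Sym2.eq_swap ▸ hzw)).reachable.trans hzs⟩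

/-! ### Alternating cycles of two perfect matchings -/

namespace IsPerfectMatchingSet

theorem piecewise (hM : IsPerfectMatchingSet G M) (hN : IsPerfectMatchingSet G N) {Z : Set V}
    (hZM : MatchingClosed M Z) (hZN : MatchingClosed N Z) :
    IsPerfectMatchingSet G
      {e | e ∈ M ∧ (∃ z ∈ e, z ∈ Z) ∨ e ∈ N ∧ ∀ z ∈ e, z ∉ Z} := by
  refine ⟨⟨?_, ?_⟩, fun v => ?_⟩
  · rintro e (⟨he, -⟩ | ⟨he, -⟩)
    · exact hM.1.1 he
    · exact hN.1.1 he
  · rintro e (⟨he, w, hwe, hwZ⟩ | ⟨he, heZ⟩) f (⟨hf, w', hwf, hwZ'⟩ | ⟨hf, hfZ⟩)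
      hef z hze hzf
    · exact hM.1.2 e he f hf hef z hze hzf
    · exact hfZ z hzf (hZM.mem_of_mem_edge he hwe hwZ hze)
    · exact heZ z hze (hZM.mem_of_mem_edge hf hwf hwZ' hzf)
    · exact hN.1.2 e he f hf hef z hze hzf
  · by_cases hv : v ∈ Z
    · exact ⟨_, Or.inl ⟨hM.mk_partner_mem v, v, Sym2.mem_mk_left _ _, hv⟩,
        Sym2.mem_mk_left _ _⟩
    · refine ⟨_, Or.inr ⟨hN.mk_partner_mem v, fun z hz hzZ => hv ?_⟩, Sym2.mem_mk_left _ _⟩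
      exact (hZN.mem_of_mem_edge (hN.mk_partner_mem v) hz hzZ (Sym2.mem_mk_left _ _))

section Orbit

variable (hM : IsPerfectMatchingSet G M) (hN : IsPerfectMatchingSet G N)

noncomputable def partnerPerm : Equiv.Perm V :=
  Function.Involutive.toPerm _ hM.partner_partner

theorem partnerPerm_apply (z : V) : hM.partnerPerm z = hM.partner z := rfl

/-- Rotates each alternating cycle of `M ∪ N` by two steps. -/
noncomputable def alternatingPerm : Equiv.Perm V :=
  hN.partnerPerm * hM.partnerPerm

theorem alternatingPerm_apply (z : V) :
    hM.alternatingPerm hN z = hN.partner (hM.partner z) := rfl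

/-- The involution `μ := partnerPerm` conjugates `σ := alternatingPerm` to `σ⁻¹`. So if
`σ^m b = μ b` with `m = 2t + r`, then `c := σ^t b` satisfies `μ c = σ^r c`: for `r = 0`, `c` is
a fixed point of `μ`; for `r = 1`, `μ c` is a fixed point of `N`'s involution. -/
theorem zpow_apply_ne_partner (x : V) (i j : ℤ) :
    (hM.alternatingPerm hN ^ i) x ≠ hM.partner ((hM.alternatingPerm hN ^ j) x) := by
  set σ := hM.alternatingPerm hN
  set μ := hM.partnerPerm
  have hconj : SemiconjBy μ σ σ⁻¹ := by
    refine Equiv.ext fun z => ?_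
    rw [Equiv.Perm.mul_apply, Equiv.Perm.mul_apply, eq_comm, Equiv.Perm.inv_eq_iff_eq]
    simp [σ, μ, alternatingPerm_apply, partnerPerm_apply, hM.partner_partner, hN.partner_partner]
  have hflip (t : ℤ) (z : V) : μ ((σ ^ t) z) = (σ ^ (-t)) (μ z) := by
    rw [← Equiv.Perm.mul_apply, (hconj.zpow_right t).eq, inv_zpow', Equiv.Perm.mul_apply]
  intro h
  obtain ⟨t, r, hm, hr⟩ : ∃ t r : ℤ, i - j = 2 * t + r ∧ (r = 0 ∨ r = 1) :=
    ⟨(i - j) / 2, (i - j) % 2, by omega, Int.emod_two_eq _⟩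
  have hb : μ ((σ ^ t) ((σ ^ j) x)) = (σ ^ r) ((σ ^ t) ((σ ^ j) x)) := by
    rw [hflip, partnerPerm_apply, ← h]
    simp only [← Equiv.Perm.mul_apply, ← zpow_add]
    congr 2
    omega
  rw [partnerPerm_apply] at hb
  rcases hr with rfl | rfl
  · exact hM.partner_ne _ (by simpa using hb)
  · exact hN.partner_ne _ (by simpa [σ, alternatingPerm_apply] using hb.symm)

theorem pow_apply_ne_partner (x : V) (i j : ℕ) :
    (hM.alternatingPerm hN ^ i) x ≠ hM.partner ((hM.alternatingPerm hN ^ j) x) := by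
  simpa only [zpow_natCast] using hM.zpow_apply_ne_partner hN x i j

theorem ne_of_mem_orbit_prefix (x : V) {i : ℕ}
    (hinj : Set.InjOn (fun j : ℕ => (hM.alternatingPerm hN ^ j) x) (Set.Iic (i + 1))) {z : V}
    (hz : ∃ j ≤ i, z = (hM.alternatingPerm hN ^ j) x ∨
      j < i ∧ z = hM.partner ((hM.alternatingPerm hN ^ j) x)) :
    z ≠ hM.partner ((hM.alternatingPerm hN ^ i) x) ∧
      z ≠ (hM.alternatingPerm hN ^ (i + 1)) x := by
  obtain ⟨j, hj, rfl | ⟨hji, rfl⟩⟩ := hz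
  · refine ⟨hM.pow_apply_ne_partner hN x j i, fun h => ?_⟩
    exact absurd (hinj (Set.mem_Iic.mpr (by omega)) (Set.mem_Iic.mpr le_rfl) h) (by omega)
  · refine ⟨fun h => ?_, (hM.pow_apply_ne_partner hN x (i + 1) j).symm⟩
    have := congrArg hM.partner h
    simp only [partner_partner] at this
    exact hji.ne (hinj (Set.mem_Iic.mpr (by omega)) (Set.mem_Iic.mpr (by omega)) this)

/-- The walk `x, μ x, σ x, μ σ x, …, σ^i x` alternately following `M` and `N`. -/
theorem exists_path_to_alternatingPerm_pow (x : V) :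
    ∀ i : ℕ, Set.InjOn (fun j : ℕ => (hM.alternatingPerm hN ^ j) x) (Set.Iic i) →
      ∃ W : G.Walk x ((hM.alternatingPerm hN ^ i) x), W.IsPath ∧ W.Alternates M true ∧
        W.length = 2 * i ∧ (∀ e ∈ W.edges, e ∈ M ∨ e ∈ N) ∧
        ∀ z ∈ W.support, ∃ j ≤ i, z = (hM.alternatingPerm hN ^ j) x ∨
          j < i ∧ z = hM.partner ((hM.alternatingPerm hN ^ j) x)
  | 0, _ => ⟨Walk.nil.copy rfl (by simp), by simp, by simp, by simp, by simp, by simp⟩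
  | i + 1, hinj => by
    set σ := hM.alternatingPerm hN
    obtain ⟨W, hW, hWalt, hWlen, hWedges, hWsupp⟩ :=
      exists_path_to_alternatingPerm_pow x i (hinj.mono (Set.Iic_subset_Iic.mpr i.le_succ))
    have hsucc : hN.partner (hM.partner ((σ ^ i) x)) = (σ ^ (i + 1)) x := by
      rw [pow_succ', Equiv.Perm.mul_apply, alternatingPerm_apply]
    have ha : hM.partner ((σ ^ i) x) ∉ W.support := fun hmem =>
      (hM.ne_of_mem_orbit_prefix hN x hinj (hWsupp _ hmem)).1 rfl
    have ha' : (σ ^ (i + 1)) x ∉ (W.concat (hM.adj_partner ((σ ^ i) x))).support := by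
      rw [support_concat, List.mem_append, List.mem_singleton, not_or]
      exact ⟨fun hmem => (hM.ne_of_mem_orbit_prefix hN x hinj (hWsupp _ hmem)).2 rfl,
        hM.pow_apply_ne_partner hN x (i + 1) i⟩
    refine ⟨((W.concat (hM.adj_partner ((σ ^ i) x))).concat (hN.adj_partner _)).copy rfl hsucc,
      ?_, ?_, ?_, ?_, ?_⟩
    · rw [isPath_copy]
      exact (hW.concat ha _).concat (hsucc ▸ ha') _
    · -- the `N`-edge at `μ (σ^i x)` is not in `M`, as otherwise `σ^(i+1) x = σ^i x`
      have hN_not_M : s(hM.partner ((σ ^ i) x), (σ ^ (i + 1)) x) ∉ M := by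
        intro h
        have := hM.partner_eq_of_mem h
        rw [partner_partner] at this
        exact absurd (hinj (Set.mem_Iic.mpr (by omega)) (Set.mem_Iic.mpr le_rfl) this) (by omega)
      simp only [alternates_copy, alternates_concat, length_concat, hWlen, hsucc]
      exact ⟨⟨hWalt, by simpa using hM.mk_partner_mem _⟩,
        by simpa [Nat.odd_add_one] using hN_not_M⟩
    · simp [hWlen]
      ring
    · simp only [edges_copy, edges_concat, List.concat_eq_append, List.mem_append,
        List.mem_singleton]
      rintro e ((he | rfl) | rfl)
      · exact hWedges e he
      · exact Or.inl (hM.mk_partner_mem ((σ ^ i) x))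
      · exact Or.inr (hN.mk_partner_mem _)
    · simp only [support_copy, support_concat, List.mem_append, List.mem_singleton]
      rintro z ((hz | rfl) | rfl)
      · obtain ⟨j, hj, h⟩ := hWsupp z hz
        exact ⟨j, by omega, h.imp_right fun h => ⟨by omega, h.2⟩⟩
      · exact ⟨i, by omega, Or.inr ⟨by omega, rfl⟩⟩
      · exact ⟨i + 1, le_rfl, Or.inl hsucc⟩

end Orbit

theorem exists_alternating_path_of_pow_apply_mem (hM : IsPerfectMatchingSet G M)
    (hN : IsPerfectMatchingSet G N) {x : V} {K : Set V} (hK : MatchingClosed M K)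
    (h : ∃ i : ℕ, (hM.alternatingPerm hN ^ i) x ∈ K) :
    ∃ y ∈ K, ∃ P : G.Walk x y, P.IsPath ∧ P.Alternates M true ∧ Even P.length ∧
      (∀ e ∈ P.edges, e ∈ M ∨ e ∈ N) ∧ ∀ z ∈ P.support, z ∈ K → z = y := by
  classical
  set σ := hM.alternatingPerm hN
  have hmin {j : ℕ} (hj : j < Nat.find h) : (σ ^ j) x ∉ K := Nat.find_min h hj
  have hinj : Set.InjOn (fun j : ℕ => (σ ^ j) x) (Set.Iic (Nat.find h)) := by
    intro j hj k hk hjk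
    by_contra hne
    wlog hlt : j < k generalizing j k
    · exact this hk hj hjk.symm (Ne.symm hne) (by omega)
    -- `σ ^ (k - j)` fixes `x`, so the orbit would reach `K` already at step `find h - (k - j)`
    have hfix : (σ ^ (k - j)) x = x := by
      apply (σ ^ j).injective
      rw [← Equiv.Perm.mul_apply, ← pow_add, Nat.add_sub_cancel' hlt.le]
      exact hjk.symm
    have hk' := Set.mem_Iic.mp hk
    have hearly : (σ ^ Nat.find h) x = (σ ^ (Nat.find h - (k - j))) ((σ ^ (k - j)) x) := by
      rw [← Equiv.Perm.mul_apply, ← pow_add, Nat.sub_add_cancel (by omega)]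
    rw [hfix] at hearly
    exact hmin (by omega) (hearly ▸ Nat.find_spec h)
  obtain ⟨W, hW, hWalt, hWlen, hWedges, hWsupp⟩ :=
    hM.exists_path_to_alternatingPerm_pow hN x _ hinj
  refine ⟨_, Nat.find_spec h, W, hW, hWalt, ⟨Nat.find h, by omega⟩, hWedges, ?_⟩
  intro z hz hzK
  obtain ⟨j, hj, rfl | ⟨hji, rfl⟩⟩ := hWsupp z hz
  · obtain rfl : j = Nat.find h := by
      by_contra hne
      exact hmin (lt_of_le_of_ne hj hne) hzK
    rfl
  · exact absurd (hK (Sym2.eq_swap ▸ hM.mk_partner_mem _) hzK) (hmin hji)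

/-- The witness is `N` switched to `M` on the `M`-`N` alternating cycle through `x`, which
misses `K`. -/
theorem exists_piecewise_of_pow_apply_not_mem [Finite V] (hM : IsPerfectMatchingSet G M)
    (hN : IsPerfectMatchingSet G N) {x : V} {K : Set V} (hK : MatchingClosed M K)
    (h : ∀ i : ℕ, (hM.alternatingPerm hN ^ i) x ∉ K) :
    ∃ N' : Set (Sym2 V), IsPerfectMatchingSet G N' ∧ s(x, hM.partner x) ∈ N' ∧
      ∀ ⦃a b : V⦄, s(a, b) ∈ N → b ∈ K → s(a, b) ∈ N' := by
  set σ := hM.alternatingPerm hN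
  have hzpow (i : ℤ) : (σ ^ i) x ∉ K := by
    obtain ⟨n, hn⟩ : σ ^ i ∈ Submonoid.powers σ :=
      (isOfFinOrder_of_finite σ).mem_powers_iff_mem_zpowers.mpr (Subgroup.zpow_mem_zpowers σ i)
    rw [← hn]
    exact h n
  have hstep (i : ℤ) : (σ ^ (i + 1)) x = hN.partner (hM.partner ((σ ^ i) x)) := by
    rw [add_comm, zpow_one_add, Equiv.Perm.mul_apply, alternatingPerm_apply]
  set Z : Set V := {z | ∃ i : ℤ, z = (σ ^ i) x ∨ z = hM.partner ((σ ^ i) x)}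
  have hZK : ∀ z ∈ Z, z ∉ K := by
    rintro z ⟨i, rfl | rfl⟩ hzK
    · exact hzpow i hzK
    · exact hzpow i (hK (Sym2.eq_swap ▸ hM.mk_partner_mem _) hzK)
  have hZM : MatchingClosed M Z := by
    refine hM.matchingClosed_iff.mpr ?_
    rintro z ⟨i, rfl | rfl⟩
    · exact ⟨i, Or.inr rfl⟩
    · exact ⟨i, Or.inl (hM.partner_partner _)⟩
  have hZN : MatchingClosed N Z := by
    refine hN.matchingClosed_iff.mpr ?_
    rintro z ⟨i, rfl | rfl⟩
    · refine ⟨i - 1, Or.inr ?_⟩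
      rw [← sub_add_cancel i 1, hstep, hN.partner_partner, sub_add_cancel]
    · exact ⟨i + 1, Or.inl (hstep i).symm⟩
  refine ⟨_, hM.piecewise hN hZM hZN,
    Or.inl ⟨hM.mk_partner_mem x, x, Sym2.mem_mk_left _ _, 0, Or.inl (by simp)⟩,
    fun a b hab hbK => Or.inr ⟨hab, ?_⟩⟩
  have hb : b ∉ Z := fun hbZ => hZK b hbZ hbK
  have ha : a ∉ Z := fun haZ => hb (hZN hab haZ)
  intro z hz
  rcases Sym2.mem_iff.mp hz with rfl | rfl
  exacts [ha, hb]

end IsPerfectMatchingSet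

/-! ### Alternating paths inside a factor-component -/

theorem mem_edgeSet_allowedSubgraph {e : Sym2 V} :
    e ∈ (allowedSubgraph G).edgeSet ↔ e ∈ G.edgeSet ∧ Allowed G e := by
  induction e using Sym2.ind with
  | _ a b => exact Iff.rfl

theorem SimpleGraph.Walk.reachable_allowedSubgraph_of_mem_support {a b z : V} {P : G.Walk a b}
    (hP : ∀ e ∈ P.edges, Allowed G e) (hz : z ∈ P.support) :
    (allowedSubgraph G).Reachable a z := by
  classical
  refine ((P.takeUntil z hz).transfer _ fun e he => ?_).reachable
  have he' := P.edges_takeUntil_subset_edges hz he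
  exact mem_edgeSet_allowedSubgraph.mpr ⟨P.edges_subset_edgeSet he', hP e he'⟩

theorem IsPerfectMatchingSet.exists_alternating_path_into [Finite V]
    (hM : IsPerfectMatchingSet G M) {x : V} {K : Set V}
    (hK : ∀ N, IsPerfectMatchingSet G N → s(x, hM.partner x) ∈ N → MatchingClosed N K)
    {a b : V} (hab : (allowedSubgraph G).Adj a b) (haK : a ∉ K) (hbK : b ∈ K) :
    ∃ y ∈ K, ∃ P : G.Walk x y, P.IsPath ∧ P.Alternates M true ∧ Even P.length ∧
      (∀ e ∈ P.edges, Allowed G e) ∧ ∀ z ∈ P.support, z ∈ K → z = y := by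
  obtain ⟨N, hN, habN⟩ := hab.2
  have hKM := hK M hM (hM.mk_partner_mem x)
  by_cases h : ∃ i : ℕ, (hM.alternatingPerm hN ^ i) x ∈ K
  · obtain ⟨y, hyK, P, hP, hPalt, hPeven, hPedges, hPK⟩ :=
      hM.exists_alternating_path_of_pow_apply_mem hN hKM h
    exact ⟨y, hyK, P, hP, hPalt, hPeven, fun e he => (hPedges e he).elim hM.allowed hN.allowed,
      hPK⟩
  · push Not at h
    obtain ⟨N', hN', hxN', hN'K⟩ := hM.exists_piecewise_of_pow_apply_not_mem hN hKM h
    exact absurd (hK N' hN' hxN' (Sym2.eq_swap ▸ hN'K habN hbK) hbK) haK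

theorem IsPerfectMatchingSet.exists_alternating_path_of_reachable [Finite V]
    (hM : IsPerfectMatchingSet G M) {x s : V} (h : (allowedSubgraph G).Reachable x s) :
    ∃ P : G.Walk x s, P.IsPath ∧ P.Alternates M true ∧ ∀ e ∈ P.edges, Allowed G e := by
  obtain ⟨n, hn⟩ : ∃ n, Nat.card V = n := ⟨_, rfl⟩
  induction n using Nat.strong_induction_on generalizing V with
  | _ n ih =>
  by_cases hsx : s = x
  · subst hsx
    exact ⟨nil, .nil, trivial, by simp⟩
  by_cases hsx' : s = hM.partner x
  · subst hsx'
    refine ⟨cons (hM.adj_partner x) nil, by simpa using (hM.partner_ne x).symm,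
      ⟨iff_of_true (hM.mk_partner_mem x) rfl, trivial⟩,
      by simpa using hM.allowed (hM.mk_partner_mem x)⟩
  set S : Set V := {x, hM.partner x}ᶜ
  have hs : s ∈ S := by simp [S, hsx, hsx']
  set K : Set V := {b | ∃ hb : b ∈ S,
    (allowedSubgraph (G.induce S)).Reachable ⟨b, hb⟩ ⟨s, hs⟩}
  have hK (N : Set (Sym2 V)) (hN : IsPerfectMatchingSet G N) (hxN : s(x, hM.partner x) ∈ N) :
      MatchingClosed N K :=
    hN.matchingClosed_allowedSubgraph_induce_compl_pair hxN hs
  obtain ⟨W⟩ := h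
  obtain ⟨d, -, hd₁, hd₂⟩ := W.exists_boundary_dart Kᶜ (fun ⟨hx, _⟩ => hx (by simp))
    (by simpa using ⟨hs, Reachable.refl _⟩)
  obtain ⟨y, ⟨hy, hys⟩, P, hP, hPalt, hPeven, hPedges, hPK⟩ :=
    hM.exists_alternating_path_into hK d.adj hd₁ (by simpa using hd₂)
  obtain ⟨T, hT, hTalt, hTedges⟩ := ih _ (hn ▸ Finite.card_subtype_lt (x := x) (by simp))
    (hM.induce (hM.1.2.matchingClosed_compl_pair (hM.mk_partner_mem x))) hys rfl
  let ι : G.induce S →g G := ⟨Subtype.val, id⟩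
  have hTK : ∀ z ∈ (T.map ι).support, z ∈ K := by
    simp only [Walk.support_map, List.mem_map]
    rintro _ ⟨z, hz, rfl⟩
    exact ⟨z.2, (reachable_allowedSubgraph_of_mem_support hTedges hz).symm.trans hys⟩
  refine ⟨P.append (T.map ι), ?_, ?_, ?_⟩
  · exact hP.append_of_support_inter (hT.map Subtype.val_injective)
      fun z hz hzT => hPK z hz (hTK z hzT)
  · exact hPalt.append_of_even hPeven (hTalt.map _ fun _ _ => Iff.rfl)
  · intro e he
    rw [edges_append, List.mem_append, Walk.edges_map, List.mem_map] at he
    obtain he | ⟨e, he, rfl⟩ := he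
    · exact hPedges e he
    · exact Allowed.of_induce_compl_pair (hM.adj_partner x) (hTedges e he)

theorem IsFactorComponent.reachable {C : Set V} (hC : IsFactorComponent G C) {a b : V}
    (ha : a ∈ C) (hb : b ∈ C) : (allowedSubgraph G).Reachable a b := by
  obtain ⟨c, rfl⟩ := hC
  exact ConnectedComponent.exact (ha.trans hb.symm)

theorem IsFactorComponent.mem_of_reachable {C : Set V} (hC : IsFactorComponent G C) {a b : V}
    (ha : a ∈ C) (h : (allowedSubgraph G).Reachable a b) : b ∈ C := by
  obtain ⟨c, rfl⟩ := hC
  exact (ConnectedComponent.sound h).symm.trans ha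

theorem IsPerfectMatchingSet.exists_alternating_path_to_saturated_path [Finite V]
    (hM : IsPerfectMatchingSet G M) {C : Set V} (hC : IsFactorComponent G C) {x₀ y₀ : V}
    {q : G.Walk x₀ y₀} (hq : IsSaturatedPath M q) {w : V} (hwq : w ∈ q.support)
    (hwC : w ∈ C) {x : V} (hx : x ∈ C ∨ x ∈ q.support) :
    ∃ y ∈ q.support, ∃ Q : G.Walk x y, Q.IsPath ∧ Q.Alternates M true ∧ Even Q.length ∧
      (∀ z ∈ Q.support, z ∈ C ∨ z ∈ q.support) ∧
      ∀ z ∈ Q.support, z ∈ q.support → z = y := by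
  by_cases hxq : x ∈ q.support
  · exact ⟨x, hxq, nil, .nil, trivial, ⟨0, rfl⟩, by simp [hxq], by simp⟩
  have hxC := hx.resolve_right hxq
  obtain ⟨R, hR, hRalt, hRedges⟩ :=
    hM.exists_alternating_path_of_reachable (hC.reachable hxC hwC)
  obtain ⟨y, hyq, Q, hQ, hQalt, hQeven, hQR, hQq⟩ :=
    hR.exists_alternating_prefix (hq.matchingClosed hM.1.2) hRalt hwq
  refine ⟨y, hyq, Q, hQ, hQalt, hQeven, fun z hz => Or.inl ?_, hQq⟩
  exact hC.mem_of_reachable hxC (reachable_allowedSubgraph_of_mem_support hRedges (hQR hz))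

/-! ### Segments of an ear -/

namespace SimpleGraph.Walk

theorem mem_support_cons_concat_iff {u x₀ y₀ v z : V} (hux : G.Adj u x₀)
    (q : G.Walk x₀ y₀) (hyv : G.Adj y₀ v) :
    z ∈ (cons hux (q.concat hyv)).support ↔ z = u ∨ z ∈ q.support ∨ z = v := by
  simp

variable [DecidableEq V]

theorem dropUntil_append_of_mem_left {u v w x : V} (p : G.Walk u v) (q : G.Walk v w)
    (hx : x ∈ p.support) :
    (p.append q).dropUntil x (support_subset_support_append_left _ _ hx) =
      (p.dropUntil x hx).append q := by
  induction p with
  | nil => rw [mem_support_nil_iff] at hx; subst_vars; simp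
  | @cons a _ _ h p ih =>
    by_cases hax : a = x
    · subst hax
      simp
    · have hxp : x ∈ p.support := by simpa [Ne.symm hax] using hx
      simp [dropUntil, hax, ih _ hxp]

theorem reverse_takeUntil_cons_concat {u x₀ y₀ v y : V} (hux : G.Adj u x₀)
    (q : G.Walk x₀ y₀) (hyv : G.Adj y₀ v) (hy : y ∈ (cons hux (q.concat hyv)).support)
    (hyq : y ∈ q.support) (huy : u ≠ y) :
    ((cons hux (q.concat hyv)).takeUntil y hy).reverse =
      (q.takeUntil y hyq).reverse.concat hux.symm := by
  simp only [concat_eq_append] at hy ⊢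
  rw [takeUntil_cons (support_subset_support_append_left _ _ hyq) huy,
    takeUntil_append_of_mem_left, reverse_cons]

theorem dropUntil_cons_concat {u x₀ y₀ v y : V} (hux : G.Adj u x₀) (q : G.Walk x₀ y₀)
    (hyv : G.Adj y₀ v) (hy : y ∈ (cons hux (q.concat hyv)).support) (hyq : y ∈ q.support)
    (huy : u ≠ y) :
    (cons hux (q.concat hyv)).dropUntil y hy = (q.dropUntil y hyq).concat hyv := by
  simp only [concat_eq_append] at hy ⊢
  rw [← dropUntil_append_of_mem_left _ _ hyq]
  simp [dropUntil, huy]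

end SimpleGraph.Walk

theorem isBalancedPath_append {x y w : V} {Q : G.Walk x y} {R : G.Walk y w} (hQ : Q.IsPath)
    (hQalt : Q.Alternates M true) (hQeven : Even Q.length) (hR : R.IsPath)
    (hRalt : R.Alternates M true) (hReven : Even R.length)
    (hQR : ∀ z ∈ Q.support, z ∈ R.support → z = y) : IsBalancedPath M (Q.append R) :=
  (hQalt.append_of_even hQeven hRalt).isBalancedPath (hQ.append_of_support_inter hR hQR)
    (by simpa using hQeven.add hReven)

/-- The segment back to `u` is the balanced one if `q` reaches `y` after an odd number of steps,
the segment on to `v` otherwise. -/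
theorem IsSaturatedPath.balanced_segment [DecidableEq V] (hM : DisjointEdges M)
    {u x₀ y₀ v y : V} {q : G.Walk x₀ y₀} (hq : IsSaturatedPath M q) (hux : G.Adj u x₀)
    (hyv : G.Adj y₀ v) (hu : u ∉ q.support) (hv : v ∉ q.support) (hy : y ∈ q.support) :
    (((q.takeUntil y hy).reverse.concat hux.symm).IsPath ∧
        ((q.takeUntil y hy).reverse.concat hux.symm).Alternates M true ∧
        Even ((q.takeUntil y hy).reverse.concat hux.symm).length) ∨
      (((q.dropUntil y hy).concat hyv).IsPath ∧
        ((q.dropUntil y hy).concat hyv).Alternates M true ∧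
        Even ((q.dropUntil y hy).concat hyv).length) := by
  have hsplit := (alternates_append _ _ true).mp ((q.take_spec hy).symm ▸ hq.alternates hM)
  have hlen : (q.takeUntil y hy).length + (q.dropUntil y hy).length = q.length := by
    rw [← length_append, take_spec]
  have hodd := hq.2.1
  have hclosed := hq.matchingClosed hM
  rcases Nat.even_or_odd (q.takeUntil y hy).length with heven | hodd'
  · right
    have hvD : v ∉ (q.dropUntil y hy).support := fun h =>
      hv (support_dropUntil_subset_support _ _ h)
    have hyvM : s(y₀, v) ∉ M := fun h => hv (hclosed h q.end_mem_support)
    have hDodd : Odd (q.dropUntil y hy).length := by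
      rcases heven with ⟨k, hk⟩
      rcases hodd with ⟨m, hm⟩
      exact ⟨m - k, by omega⟩
    refine ⟨(hq.1.dropUntil hy).concat hvD hyv, ?_, by simpa [Nat.even_add_one] using hDodd⟩
    rw [alternates_concat]
    refine ⟨by simpa [Nat.not_odd_iff_even.mpr heven] using hsplit.2, ?_⟩
    simpa [hDodd] using hyvM
  · left
    have huT : u ∉ (q.takeUntil y hy).reverse.support := by
      simpa using fun h => hu (support_takeUntil_subset_support _ _ h)
    have hxuM : s(x₀, u) ∉ M := fun h => hu (hclosed h q.start_mem_support)
    refine ⟨(hq.1.takeUntil hy).reverse.concat huT hux.symm, ?_,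
      by simpa [Nat.even_add_one] using hodd'⟩
    rw [alternates_concat]
    refine ⟨by simpa [← Nat.not_odd_iff_even, hodd'] using hsplit.1.reverse, ?_⟩
    simpa [hodd'] using hxuM

theorem IsSaturatedPath.balanced_append_ear_segment [DecidableEq V] (hM : DisjointEdges M)
    {u x₀ y₀ v x y : V} {q : G.Walk x₀ y₀} (hq : IsSaturatedPath M q) (hux : G.Adj u x₀)
    (hyv : G.Adj y₀ v) (hu : u ∉ q.support) (hv : v ∉ q.support) {p : G.Walk u v}
    (hp : p = cons hux (q.concat hyv)) (hy : y ∈ p.support) (hyq : y ∈ q.support)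
    {Q : G.Walk x y} (hQ : Q.IsPath) (hQalt : Q.Alternates M true) (hQeven : Even Q.length)
    (hQp : ∀ z ∈ Q.support, z ∈ p.support → z = y) :
    (IsBalancedPath M (Q.append (p.takeUntil y hy).reverse) ∧
        ∀ z ∈ (Q.append (p.takeUntil y hy).reverse).support, z ≠ u →
          z ∈ Q.support ∨ z ∈ q.support) ∨
      (IsBalancedPath M (Q.append (p.dropUntil y hy)) ∧
        ∀ z ∈ (Q.append (p.dropUntil y hy)).support, z ≠ v →
          z ∈ Q.support ∨ z ∈ q.support) := by
  subst hp
  have huy : u ≠ y := fun h => hu (h ▸ hyq)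
  rw [reverse_takeUntil_cons_concat _ _ _ hy hyq huy, dropUntil_cons_concat _ _ _ hy hyq huy]
  rcases hq.balanced_segment hM hux hyv hu hv hyq with
    ⟨hL, hLalt, hLeven⟩ | ⟨hD, hDalt, hDeven⟩
  · left
    have hL_supp (z : V) (hz : z ∈ ((q.takeUntil y hyq).reverse.concat hux.symm).support) :
        z = u ∨ z ∈ q.support := by
      simp only [support_concat, support_reverse, List.mem_append, List.mem_reverse,
        List.mem_singleton] at hz
      exact hz.elim (fun h => Or.inr (support_takeUntil_subset_support _ _ h)) Or.inl
    refine ⟨isBalancedPath_append hQ hQalt hQeven hL hLalt hLeven fun z hzQ hzL =>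
      hQp z hzQ ((mem_support_cons_concat_iff _ _ _).mpr (by have := hL_supp z hzL; tauto)),
      fun z hz hzu => ?_⟩
    rcases (mem_support_append_iff _ _).mp hz with hz | hz
    exacts [Or.inl hz, Or.inr ((hL_supp z hz).resolve_left hzu)]
  · right
    have hD_supp (z : V) (hz : z ∈ ((q.dropUntil y hyq).concat hyv).support) :
        z = v ∨ z ∈ q.support := by
      simp only [support_concat, List.mem_append, List.mem_singleton] at hz
      exact hz.elim (fun h => Or.inr (support_dropUntil_subset_support _ _ h)) Or.inl
    refine ⟨isBalancedPath_append hQ hQalt hQeven hD hDalt hDeven fun z hzQ hzD =>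
      hQp z hzQ ((mem_support_cons_concat_iff _ _ _).mpr (by have := hD_supp z hzD; tauto)),
      fun z hz hzv => ?_⟩
    rcases (mem_support_append_iff _ _).mp hz with hz | hz
    exacts [Or.inl hz, Or.inr ((hD_supp z hz).resolve_left hzv)]

theorem mem_ear_support_sdiff_iff {X C : Set V} (hCX : Disjoint C X) {u x₀ y₀ v z : V}
    (hux : G.Adj u x₀) {q : G.Walk x₀ y₀} (hyv : G.Adj y₀ v) (hu : u ∈ X) (hv : v ∈ X)
    (hqX : ∀ w ∈ q.support, w ∉ X) :
    z ∈ (C ∪ {x | x ∈ (cons hux (q.concat hyv)).support}) \ {u, v} ↔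
      z ∈ C ∨ z ∈ q.support := by
  have hC : z ∈ C → z ≠ u ∧ z ≠ v := fun hz =>
    ⟨fun h => Set.disjoint_left.mp hCX hz (h ▸ hu),
      fun h => Set.disjoint_left.mp hCX hz (h ▸ hv)⟩
  have hq : z ∈ q.support → z ≠ u ∧ z ≠ v := fun hz =>
    ⟨fun h => hqX z hz (h ▸ hu), fun h => hqX z hz (h ▸ hv)⟩
  simp only [Set.mem_sdiff, Set.mem_union, Set.mem_ofPred_eq, mem_support_cons_concat_iff,
    Set.mem_insert_iff, Set.mem_singleton_iff]
  tauto

theorem statement_8_general {V : Type*} [Fintype V] [DecidableEq V] (G : SimpleGraph V)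
    (M : Set (Sym2 V)) (hM : IsPerfectMatchingSet G M)
    (X : Set V)
    (C : Set V) (hC : IsFactorComponent G C) (hCX : Disjoint C X)
    (u v : V) (p : G.Walk u v) (hp : IsMEarThrough G M X C p)
    (Y : Set V) (hY : Y = (C ∪ {x : V | x ∈ p.support}) \ {u, v}) :
    ∀ x ∈ Y, ∃ (y : V) (hy : y ∈ p.support) (Q : G.Walk x y),
      y ≠ u ∧ y ≠ v ∧ IsBalancedPath M Q ∧
      (∀ z ∈ Q.support, z ∈ Y) ∧ (∀ z ∈ Q.support, z ∈ p.support → z = y) ∧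
      ((IsBalancedPath M (Q.append (p.takeUntil y hy).reverse) ∧
          ∀ z ∈ (Q.append (p.takeUntil y hy).reverse).support, z ≠ u → z ∈ Y) ∨
        (IsBalancedPath M (Q.append (p.dropUntil y hy)) ∧
          ∀ z ∈ (Q.append (p.dropUntil y hy)).support, z ≠ v → z ∈ Y)) := by
  intro x hxY
  obtain ⟨⟨huX, hvX, -, x₀, y₀, hux, q, hyv, rfl, hq, hqX⟩, w, hwp, hwX, hwC⟩ := hp
  subst hY
  have hY (z : V) := mem_ear_support_sdiff_iff (z := z) hCX hux hyv huX hvX hqX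
  have hu : u ∉ q.support := fun h => hqX u h huX
  have hv : v ∉ q.support := fun h => hqX v h hvX
  have hwq : w ∈ q.support := by
    rcases (mem_support_cons_concat_iff _ _ _).mp hwp with rfl | hwq | rfl
    exacts [absurd huX hwX, hwq, absurd hvX hwX]
  obtain ⟨y, hyq, Q, hQ, hQalt, hQeven, hQY, hQq⟩ :=
    hM.exists_alternating_path_to_saturated_path hC hq hwq hwC ((hY x).mp hxY)
  have hQp (z : V) (hzQ : z ∈ Q.support) (hzp : z ∈ (cons hux (q.concat hyv)).support) :
      z = y := by
    have hzuv := ((hY z).mpr (hQY z hzQ)).2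
    rw [mem_support_cons_concat_iff] at hzp
    simp only [Set.mem_insert_iff, Set.mem_singleton_iff] at hzuv
    exact hQq z hzQ (by tauto)
  have hy := (mem_support_cons_concat_iff hux q hyv).mpr (Or.inr (Or.inl hyq))
  refine ⟨y, hy, Q, fun h => hu (h ▸ hyq), fun h => hv (h ▸ hyq),
    hQalt.isBalancedPath hQ hQeven, fun z hz => (hY z).mpr (hQY z hz), hQp, ?_⟩
  rcases hq.balanced_append_ear_segment hM.1.2 hux hyv hu hv rfl hy hyq hQ hQalt hQeven hQp with
    ⟨hbal, hsupp⟩ | ⟨hbal, hsupp⟩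
  · exact Or.inl ⟨hbal, fun z hz hzu => (hY z).mpr ((hsupp z hz hzu).elim (hQY z) Or.inr)⟩
  · exact Or.inr ⟨hbal, fun z hz hzv => (hY z).mpr ((hsupp z hz hzv).elim (hQY z) Or.inr)⟩

/-- Let `G` be factorizable with perfect matching `M`, `X` a separating
set, and `H` a factor-component with `V(H) ∩ X = ∅`. Let `P` be an `M`-ear relative to `X`
through `H` with end vertices `u, v ∈ X`, and `Y := (V(H) ∪ V(P)) ∖ {u, v}`. Then for
every `x ∈ Y`: (i) there is an internal vertex `y` of `P` and an `M`-balanced path `Q`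
from `x` to `y` with `V(Q) ⊆ Y` and `V(Q) ∩ V(P) = {y}`; and (ii) for one of the end
vertices `w ∈ {u, v}`, the concatenation of `Q` with the segment of `P` from `y` to `w`
is an `M`-balanced path from `x` to `w` all of whose vertices except `w` lie in `Y`. -/
theorem statement_8 {V : Type*} [Fintype V] [DecidableEq V] (G : SimpleGraph V)
    (hG : Factorizable G) (M : Set (Sym2 V)) (hM : IsPerfectMatchingSet G M)
    (X : Set V) (hXsep : Separating G X)
    (C : Set V) (hC : IsFactorComponent G C) (hCX : Disjoint C X)
    (u v : V) (p : G.Walk u v) (hp : IsMEarThrough G M X C p)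
    (Y : Set V) (hY : Y = (C ∪ {x : V | x ∈ p.support}) \ {u, v}) :
    ∀ x ∈ Y, ∃ (y : V) (hy : y ∈ p.support) (Q : G.Walk x y),
      y ≠ u ∧ y ≠ v ∧ IsBalancedPath M Q ∧
      (∀ z ∈ Q.support, z ∈ Y) ∧ (∀ z ∈ Q.support, z ∈ p.support → z = y) ∧
      ((IsBalancedPath M (Q.append (p.takeUntil y hy).reverse) ∧
          ∀ z ∈ (Q.append (p.takeUntil y hy).reverse).support, z ≠ u → z ∈ Y) ∨
        (IsBalancedPath M (Q.append (p.dropUntil y hy)) ∧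
          ∀ z ∈ (Q.append (p.dropUntil y hy)).support, z ≠ v → z ∈ Y)) :=
  statement_8_general G M hM X C hC hCX u v p hp Y hY
end

section
/- Let G be a factorizable finite simple graph and H a factor-component of G. Then the relation on V(H) defined by u ~ v if and only if u = v or G − u − v has no perfect matching is an equivalence relation on V(H). -/
open SimpleGraph

variable {V : Type*}

/-!
The tool is the alternating-path exchange. If matchings `Φ` and `N` expose the vertex sets `A`
and `B` and `v ∈ B \ A`, then in `Φ ∆ N`, a graph of maximum degree two in which the vertices
of `A ∪ B` are leaves, the component of `v` is a path ending in a second leaf `t`; parity forbids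
a single leaf and the degree bound a third one. Swapping `Φ` along it exposes `A ∆ {v, t}`.

Applied to matchings exposing `{a, b}` and `{v, z}`, with `az` an edge, the exchange makes
`G - v - a` or `G - v - b` factorizable. Removing an allowed edge from a perfect matching exposes
its two ends, so walking from `u` to `v` along allowed edges shows that `u` or a neighbour `z` of
`u` forms a factorizable pair with `v`. If moreover `G - u - w` is factorizable, one more exchange
makes `G - u - v` or `G - v - w` factorizable, which is transitivity.
-/

def exposedSet (W : Set (Sym2 V)) : Set V := {t | ∀ e ∈ W, t ∉ e}

section Matchings

variable {G : SimpleGraph V} {W : Set (Sym2 V)}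

lemma DisjointEdges.eq_of_mem_s12 {e f : Sym2 V} {x : V} (hW : DisjointEdges W) (he : e ∈ W)
    (hf : f ∈ W) (hxe : x ∈ e) (hxf : x ∈ f) : e = f :=
  not_not.mp fun hef => hW e he f hf hef x hxe hxf

lemma DisjointEdges.eq_of_mk_mem {t x y : V} (hW : DisjointEdges W) (hx : s(t, x) ∈ W)
    (hy : s(t, y) ∈ W) : x = y :=
  Sym2.congr_right.mp (hW.eq_of_mem_s12 hx hy (Sym2.mem_mk_left t x) (Sym2.mem_mk_left t y))

lemma IsMatchingSet.mono {W' : Set (Sym2 V)} (hW : IsMatchingSet G W) (h : W' ⊆ W) :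
    IsMatchingSet G W' :=
  ⟨h.trans hW.1, fun e he f hf => hW.2 e (h he) f (h hf)⟩

lemma hasPMOn_compl_iff {X : Set V} :
    HasPMOn G Xᶜ ↔ ∃ W, IsMatchingSet G W ∧ exposedSet W = X := by
  constructor
  · rintro ⟨M, hM, hin, hcov⟩
    refine ⟨M, hM, Set.ext fun t => ⟨fun ht => ?_, fun ht e he hte => hin e he t hte ht⟩⟩
    by_contra htX
    obtain ⟨e, he, hte⟩ := hcov t htX
    exact ht e he hte
  · rintro ⟨W, hW, rfl⟩
    refine ⟨W, hW, fun e he x hxe hx => hx e he hxe, fun t ht => ?_⟩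
    simpa [exposedSet] using ht

lemma exposedSet_insert (e : Sym2 V) (W : Set (Sym2 V)) :
    exposedSet (insert e W) = exposedSet W \ {x | x ∈ e} := by
  ext t
  simp [exposedSet, and_comm]

lemma IsMatchingSet.exposedSet_diff_singleton {a b : V} (hW : IsMatchingSet G W)
    (hab : s(a, b) ∈ W) : exposedSet (W \ {s(a, b)}) = {a, b} ∪ exposedSet W := by
  ext t
  simp only [exposedSet, Set.mem_ofPred_eq, Set.mem_sdiff, Set.mem_singleton_iff, Set.mem_union,
    Set.mem_insert_iff, and_imp]
  constructor
  · intro ht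
    by_contra! h
    obtain ⟨⟨hta, htb⟩, e, he, hte⟩ := h
    exact ht e he (by rintro rfl; simp [hta, htb] at hte) hte
  · rintro ((rfl | rfl) | ht) e he hne hte
    · exact hne (hW.2.eq_of_mem_s12 he hab hte (Sym2.mem_mk_left _ _))
    · exact hne (hW.2.eq_of_mem_s12 he hab hte (Sym2.mem_mk_right _ _))
    · exact ht e he hte

lemma IsMatchingSet.insert {a b : V} (hW : IsMatchingSet G W) (hab : G.Adj a b)
    (ha : a ∈ exposedSet W) (hb : b ∈ exposedSet W) : IsMatchingSet G (insert s(a, b) W) := by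
  have hfresh : ∀ f ∈ W, ∀ x ∈ s(a, b), x ∉ f := by
    rintro f hf x hx
    rcases Sym2.mem_iff.mp hx with rfl | rfl
    exacts [ha f hf, hb f hf]
  refine ⟨Set.insert_subset hab hW.1, ?_⟩
  rintro e (rfl | he) f (rfl | hf) hef x hxe hxf
  · exact hef rfl
  · exact hfresh f hf x hxe hxf
  · exact hfresh e he x hxf hxe
  · exact hW.2 e he f hf hef x hxe hxf

lemma Allowed.hasPMOn_compl_pair {a b : V} (h : Allowed G s(a, b)) :
    HasPMOn G ({a, b} : Set V)ᶜ := by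
  obtain ⟨M, hM, hab⟩ := h
  refine hasPMOn_compl_iff.mpr ⟨M \ {s(a, b)}, hM.1.mono Set.sdiff_subset, ?_⟩
  rw [hM.1.exposedSet_diff_singleton hab, Set.union_eq_left]
  intro t ht
  obtain ⟨e, he, hte⟩ := hM.2 t
  exact absurd hte (ht e he)

lemma IsMatchingSet.even_ncard_compl_exposedSet [Finite V] (hW : IsMatchingSet G W) :
    Even (exposedSet W)ᶜ.ncard := by
  induction W, W.toFinite using Set.Finite.induction_on with
  | empty => simp [exposedSet]
  | @insert e W heW _ ih =>
    have hedge : e ∈ G.edgeSet := hW.1 (Set.mem_insert e W)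
    have hdisj : Disjoint {x | x ∈ e} (exposedSet W)ᶜ := by
      refine Set.disjoint_left.mpr fun x hxe hx => hx fun f hf hxf => ?_
      exact hW.2 e (Set.mem_insert e W) f (Set.mem_insert_of_mem e hf)
        (fun h => heW (h ▸ hf)) x hxe hxf
    have hcard : ({x | x ∈ e} : Set V).ncard = 2 := by
      induction e using Sym2.ind with
      | h a b =>
        have : ({x | x ∈ s(a, b)} : Set V) = {a, b} := by ext; simp
        rw [this, Set.ncard_pair (G.ne_of_adj hedge)]
    rw [exposedSet_insert, Set.compl_sdiff, Set.ncard_union_eq hdisj, hcard]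
    exact even_two.add (ih (hW.mono (Set.subset_insert e W)))

lemma IsMatchingSet.even_ncard_exposedSet_add [Finite V] {W' : Set (Sym2 V)}
    (hW : IsMatchingSet G W) (hW' : IsMatchingSet G W') :
    Even ((exposedSet W).ncard + (exposedSet W').ncard) := by
  have h := Set.ncard_add_ncard_compl (exposedSet W)
  have h' := Set.ncard_add_ncard_compl (exposedSet W')
  obtain ⟨k, hk⟩ := hW.even_ncard_compl_exposedSet
  obtain ⟨k', hk'⟩ := hW'.even_ncard_compl_exposedSet
  exact ⟨Nat.card V - k - k', by omega⟩

end Matchings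

open scoped symmDiff

section Swap

variable {G : SimpleGraph V} {Φ N : Set (Sym2 V)} {K : Set V}

/-- When `K` is closed under the edges of `Φ ∆ N`, this is `Φ` switched along the components
of `Φ ∆ N` inside `K`. -/
def swapOn (Φ N : Set (Sym2 V)) (K : Set V) : Set (Sym2 V) :=
  {e ∈ Φ | ∀ x ∈ e, x ∉ K} ∪ {e ∈ N | ∃ x ∈ e, x ∈ K}

lemma mem_of_mem_symmDiff (hK : ∀ ⦃a b⦄, s(a, b) ∈ Φ ∆ N → a ∈ K → b ∈ K) {e : Sym2 V}
    (he : e ∈ Φ ∆ N) {x y : V} (hx : x ∈ e) (hy : y ∈ e) (hxK : x ∈ K) : y ∈ K := by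
  induction e using Sym2.ind with
  | h a b =>
    rcases Sym2.mem_iff.mp hx with rfl | rfl <;> rcases Sym2.mem_iff.mp hy with rfl | rfl
    · exact hxK
    · exact hK he hxK
    · exact hK (Sym2.eq_swap ▸ he) hxK
    · exact hxK

lemma IsMatchingSet.swapOn (hΦ : IsMatchingSet G Φ) (hN : IsMatchingSet G N)
    (hK : ∀ ⦃a b⦄, s(a, b) ∈ Φ ∆ N → a ∈ K → b ∈ K) : IsMatchingSet G (swapOn Φ N K) := by
  have hcross : ∀ e ∈ Φ, (∀ x ∈ e, x ∉ K) → ∀ f ∈ N, (∃ y ∈ f, y ∈ K) → ∀ x ∈ e, x ∉ f := by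
    rintro e heΦ he f hfN ⟨y, hyf, hyK⟩ x hxe hxf
    by_cases hfΦ : f ∈ Φ
    · obtain rfl := hΦ.2.eq_of_mem_s12 heΦ hfΦ hxe hxf
      exact he y hyf hyK
    · exact he x hxe (mem_of_mem_symmDiff hK (Or.inr ⟨hfN, hfΦ⟩) hyf hxf hyK)
  refine ⟨fun e he => he.elim (fun h => hΦ.1 h.1) (fun h => hN.1 h.1), ?_⟩
  rintro e (⟨heΦ, he⟩ | ⟨heN, he⟩) f (⟨hfΦ, hf⟩ | ⟨hfN, hf⟩) hef x hxe hxf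
  · exact hΦ.2 e heΦ f hfΦ hef x hxe hxf
  · exact hcross e heΦ he f hfN hf x hxe hxf
  · exact hcross f hfΦ hf e heN he x hxf hxe
  · exact hN.2 e heN f hfN hef x hxe hxf

lemma exposedSet_swapOn (hK : ∀ ⦃a b⦄, s(a, b) ∈ Φ ∆ N → a ∈ K → b ∈ K) :
    exposedSet (swapOn Φ N K) = (exposedSet Φ \ K) ∪ (exposedSet N ∩ K) := by
  ext t
  by_cases htK : t ∈ K
  · simp only [Set.mem_union, Set.mem_sdiff, Set.mem_inter_iff, htK, not_true_eq_false,
      and_false, and_true, false_or]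
    refine ⟨fun ht e he hte => ht e (Or.inr ⟨he, t, hte, htK⟩) hte, ?_⟩
    rintro ht e (⟨-, he⟩ | ⟨he, -⟩) hte
    · exact he t hte htK
    · exact ht e he hte
  · simp only [Set.mem_union, Set.mem_sdiff, Set.mem_inter_iff, htK, not_false_eq_true,
      and_true, and_false, or_false]
    constructor
    · intro ht e he hte
      by_cases heK : ∀ x ∈ e, x ∉ K
      · exact ht e (Or.inl ⟨he, heK⟩) hte
      push Not at heK
      by_cases heN : e ∈ N
      · exact ht e (Or.inr ⟨heN, heK⟩) hte
      obtain ⟨y, hye, hyK⟩ := heK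
      exact htK (mem_of_mem_symmDiff hK (Or.inl ⟨he, heN⟩) hye hte hyK)
    · rintro ht e (⟨he, -⟩ | ⟨heN, y, hye, hyK⟩) hte
      · exact ht e he hte
      by_cases heΦ : e ∈ Φ
      · exact ht e heΦ hte
      exact htK (mem_of_mem_symmDiff hK (Or.inr ⟨heN, heΦ⟩) hye hte hyK)

lemma even_ncard_exposedSet_inter_add [Finite V] (hΦ : IsMatchingSet G Φ)
    (hN : IsMatchingSet G N) (hK : ∀ ⦃a b⦄, s(a, b) ∈ Φ ∆ N → a ∈ K → b ∈ K) :
    Even ((exposedSet Φ ∩ K).ncard + (exposedSet N ∩ K).ncard) := by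
  have hdisj : Disjoint (exposedSet Φ \ K) (exposedSet N ∩ K) :=
    Set.disjoint_left.mpr fun _ hΦK hNK => hΦK.2 hNK.2
  obtain ⟨k, hk⟩ := (hΦ.swapOn hN hK).even_ncard_exposedSet_add hΦ
  rw [exposedSet_swapOn hK, Set.ncard_union_eq hdisj,
    ← Set.ncard_inter_add_ncard_sdiff_eq_ncard (exposedSet Φ) K] at hk
  exact ⟨k - (exposedSet Φ \ K).ncard, by omega⟩

end Swap

section Leaves

variable {S : SimpleGraph V}

lemma SimpleGraph.Walk.IsPath.exists_adj_adj_of_mem_support {s t x : V} {p : S.Walk s t}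
    (hp : p.IsPath) (hx : x ∈ p.support) (hxs : x ≠ s) (hxt : x ≠ t) :
    ∃ y z, y ≠ z ∧ y ∈ p.support ∧ z ∈ p.support ∧ S.Adj x y ∧ S.Adj x z := by
  induction p with
  | nil => exact absurd (List.mem_singleton.mp hx) hxs
  | @cons a m b h q ih =>
    rw [Walk.cons_isPath_iff] at hp
    rcases List.mem_cons.mp hx with rfl | hx
    · exact absurd rfl hxs
    by_cases hxm : x = m
    · subst hxm
      cases q with
      | nil => exact absurd rfl hxt
      | cons h' q' =>
        refine ⟨a, _, ?_, by simp, by simp, h.symm, h'⟩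
        rintro rfl
        exact hp.2 (by simp)
    · obtain ⟨y, z, hyz, hy, hz, hxy, hxz⟩ := ih hp.1 hx hxm hxt
      exact ⟨y, z, hyz, by simp [hy], by simp [hz], hxy, hxz⟩

lemma SimpleGraph.Walk.exists_adj_mem_support {s t : V} (p : S.Walk s t) (hst : s ≠ t) :
    ∃ y ∈ p.support, S.Adj s y := by
  cases p with
  | nil => exact absurd rfl hst
  | cons h q => exact ⟨_, by simp, h⟩

lemma SimpleGraph.Walk.IsPath.mem_support_of_reachable
    (hdeg : ∀ t x y z : V, S.Adj t x → S.Adj t y → S.Adj t z → x = y ∨ x = z ∨ y = z)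
    {a b c : V} {p : S.Walk a b} (hp : p.IsPath) (hab : a ≠ b)
    (ha : (S.neighborSet a).Subsingleton) (hb : (S.neighborSet b).Subsingleton)
    (hc : S.Reachable a c) : c ∈ p.support := by
  have hclosed : ∀ d ∈ p.support, ∀ d', S.Adj d d' → d' ∈ p.support := by
    intro d hd d' hdd'
    by_cases hda : d = a
    · subst hda
      obtain ⟨y, hy, hdy⟩ := p.exists_adj_mem_support hab
      exact ha hdy hdd' ▸ hy
    by_cases hdb : d = b
    · subst hdb
      obtain ⟨y, hy, hdy⟩ := p.reverse.exists_adj_mem_support hab.symm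
      rw [Walk.support_reverse, List.mem_reverse] at hy
      exact hb hdy hdd' ▸ hy
    obtain ⟨y, z, hyz, hy, hz, hdy, hdz⟩ := hp.exists_adj_adj_of_mem_support hd hda hdb
    rcases hdeg d y z d' hdy hdz hdd' with h | h | h
    exacts [absurd h hyz, h ▸ hy, h ▸ hz]
  obtain ⟨q⟩ := hc
  suffices ∀ {x y : V} (q : S.Walk x y), x ∈ p.support → y ∈ p.support from
    this q p.start_mem_support
  intro x y q hx
  induction q with
  | nil => exact hx
  | cons h _ ih => exact ih (hclosed _ hx _ h)

lemma not_reachable_of_three_leaves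
    (hdeg : ∀ t x y z : V, S.Adj t x → S.Adj t y → S.Adj t z → x = y ∨ x = z ∨ y = z)
    {a b c : V} (hab : a ≠ b) (hac : a ≠ c) (hbc : b ≠ c)
    (ha : (S.neighborSet a).Subsingleton) (hb : (S.neighborSet b).Subsingleton)
    (hc : (S.neighborSet c).Subsingleton) (hreach : S.Reachable a b) : ¬ S.Reachable a c := by
  classical
  intro hreach'
  obtain ⟨p⟩ := hreach
  have hcp := p.bypass_isPath.mem_support_of_reachable hdeg hab ha hb hreach'
  obtain ⟨y, z, hyz, -, -, hcy, hcz⟩ :=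
    p.bypass_isPath.exists_adj_adj_of_mem_support hcp hac.symm hbc.symm
  exact hyz (hc hcy hcz)

end Leaves

section Exchange

variable {G : SimpleGraph V} {Φ N : Set (Sym2 V)}

lemma SimpleGraph.Reachable.of_mk_mem_fromEdgeSet {s : Set (Sym2 V)} {v a b : V}
    (ha : (fromEdgeSet s).Reachable v a) (hab : s(a, b) ∈ s) : (fromEdgeSet s).Reachable v b := by
  by_cases h : a = b
  · exact h ▸ ha
  · exact ha.trans (show (fromEdgeSet s).Adj a b from ⟨hab, h⟩).reachable

lemma adj_fromEdgeSet_symmDiff_eq_or (hΦ : DisjointEdges Φ) (hN : DisjointEdges N)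
    {t x y z : V} (hx : (fromEdgeSet (Φ ∆ N)).Adj t x) (hy : (fromEdgeSet (Φ ∆ N)).Adj t y)
    (hz : (fromEdgeSet (Φ ∆ N)).Adj t z) : x = y ∨ x = z ∨ y = z := by
  rcases hx.1 with ⟨hx, -⟩ | ⟨hx, -⟩ <;> rcases hy.1 with ⟨hy, -⟩ | ⟨hy, -⟩ <;>
    rcases hz.1 with ⟨hz, -⟩ | ⟨hz, -⟩
  all_goals first
    | exact Or.inl (hΦ.eq_of_mk_mem hx hy) | exact Or.inl (hN.eq_of_mk_mem hx hy)
    | exact Or.inr (Or.inl (hΦ.eq_of_mk_mem hx hz)) | exact Or.inr (Or.inl (hN.eq_of_mk_mem hx hz))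
    | exact Or.inr (Or.inr (hΦ.eq_of_mk_mem hy hz)) | exact Or.inr (Or.inr (hN.eq_of_mk_mem hy hz))

lemma subsingleton_neighborSet_fromEdgeSet_symmDiff (hΦ : DisjointEdges Φ)
    (hN : DisjointEdges N) {t : V} (ht : t ∈ exposedSet Φ ∪ exposedSet N) :
    ((fromEdgeSet (Φ ∆ N)).neighborSet t).Subsingleton := by
  intro x hx y hy
  rcases ht with ht | ht
  · have hmem : ∀ {x}, (fromEdgeSet (Φ ∆ N)).Adj t x → s(t, x) ∈ N := fun h =>
      h.1.resolve_left (fun h => ht _ h.1 (Sym2.mem_mk_left _ _)) |>.1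
    exact hN.eq_of_mk_mem (hmem hx) (hmem hy)
  · have hmem : ∀ {x}, (fromEdgeSet (Φ ∆ N)).Adj t x → s(t, x) ∈ Φ := fun h =>
      h.1.resolve_right (fun h => ht _ h.1 (Sym2.mem_mk_left _ _)) |>.1
    exact hΦ.eq_of_mk_mem (hmem hx) (hmem hy)

lemma eq_of_reachable_of_mem_exposedSet {v x : V} (hx : (fromEdgeSet (Φ ∆ N)).Reachable v x)
    (hxΦ : x ∈ exposedSet Φ) (hxN : x ∈ exposedSet N) : x = v := by
  obtain ⟨p⟩ := hx.symm
  cases p with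
  | nil => rfl
  | cons h _ =>
    rcases h.1 with ⟨h, -⟩ | ⟨h, -⟩
    exacts [absurd (Sym2.mem_mk_left _ _) (hxΦ _ h), absurd (Sym2.mem_mk_left _ _) (hxN _ h)]

lemma exists_exposedSet_inter_reachable_eq_pair [Finite V] (hΦ : IsMatchingSet G Φ)
    (hN : IsMatchingSet G N) {v : V} (hvN : v ∈ exposedSet N) (hvΦ : v ∉ exposedSet Φ) :
    ∃ t ≠ v,
      (exposedSet Φ ∪ exposedSet N) ∩ {x | (fromEdgeSet (Φ ∆ N)).Reachable v x} = {v, t} := by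
  set K := {x | (fromEdgeSet (Φ ∆ N)).Reachable v x}
  set L := (exposedSet Φ ∪ exposedSet N) ∩ K
  have hvL : v ∈ L := ⟨Or.inr hvN, Reachable.refl v⟩
  have hLeven : Even L.ncard := by
    have hdisj : Disjoint (exposedSet Φ ∩ K) (exposedSet N ∩ K) :=
      Set.disjoint_left.mpr fun x hxΦ hxN =>
        hvΦ (eq_of_reachable_of_mem_exposedSet hxΦ.2 hxΦ.1 hxN.1 ▸ hxΦ.1)
    rw [show L = exposedSet Φ ∩ K ∪ exposedSet N ∩ K from Set.union_inter_distrib_right _ _ _,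
      Set.ncard_union_eq hdisj]
    exact even_ncard_exposedSet_inter_add hΦ hN fun _ _ hab ha => ha.of_mk_mem_fromEdgeSet hab
  have hLle : L.ncard ≤ 2 := by
    by_contra! h
    obtain ⟨a, b, c, ha, hb, hc, hab, hac, hbc⟩ := (Set.two_lt_ncard_iff).mp h
    have hleaf : ∀ x ∈ L, ((fromEdgeSet (Φ ∆ N)).neighborSet x).Subsingleton :=
      fun x hx => subsingleton_neighborSet_fromEdgeSet_symmDiff hΦ.2 hN.2 hx.1
    exact not_reachable_of_three_leaves (fun _ _ _ _ => adj_fromEdgeSet_symmDiff_eq_or hΦ.2 hN.2)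
      hab hac hbc (hleaf a ha) (hleaf b hb) (hleaf c hc) (ha.2.symm.trans hb.2)
      (ha.2.symm.trans hc.2)
  obtain ⟨t, ht⟩ : ∃ t, L \ {v} = {t} := by
    rw [← Set.ncard_eq_one, Set.ncard_sdiff_singleton_of_mem hvL]
    have := (Set.ncard_pos).mpr ⟨v, hvL⟩
    obtain ⟨k, hk⟩ := hLeven
    omega
  refine ⟨t, (ht ▸ rfl : t ∈ L \ {v}).2, ?_⟩
  rw [← Set.insert_eq_of_mem hvL, ← Set.insert_sdiff_singleton, ht]

theorem exists_isMatchingSet_exposedSet_symmDiff [Finite V] (hΦ : IsMatchingSet G Φ)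
    (hN : IsMatchingSet G N) {v : V} (hvN : v ∈ exposedSet N) (hvΦ : v ∉ exposedSet Φ) :
    ∃ t ≠ v, t ∈ exposedSet Φ ∪ exposedSet N ∧
      ∃ W, IsMatchingSet G W ∧ exposedSet W = exposedSet Φ ∆ {v, t} := by
  set K := {x | (fromEdgeSet (Φ ∆ N)).Reachable v x}
  have hK : ∀ ⦃a b⦄, s(a, b) ∈ Φ ∆ N → a ∈ K → b ∈ K :=
    fun _ _ hab ha => ha.of_mk_mem_fromEdgeSet hab
  obtain ⟨t, htv, hL⟩ := exists_exposedSet_inter_reachable_eq_pair hΦ hN hvN hvΦ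
  have hmem : ∀ x, (x ∈ exposedSet Φ ∨ x ∈ exposedSet N) ∧ x ∈ K ↔ x = v ∨ x = t :=
    fun x => Set.ext_iff.mp hL x
  refine ⟨t, htv, ((hmem t).mpr (Or.inr rfl)).1, swapOn Φ N K, hΦ.swapOn hN hK, ?_⟩
  rw [exposedSet_swapOn hK]
  ext x
  have hx := hmem x
  have hxv : x = v → x ∉ exposedSet Φ := by rintro rfl; exact hvΦ
  have hxboth : x ∈ K → x ∈ exposedSet Φ → x ∉ exposedSet N := fun hxK hxΦ hxN =>
    hxv (eq_of_reachable_of_mem_exposedSet hxK hxΦ hxN) hxΦ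
  simp only [Set.mem_union, Set.mem_sdiff, Set.mem_inter_iff, Set.mem_symmDiff,
    Set.mem_insert_iff, Set.mem_singleton_iff]
  tauto

theorem hasPMOn_compl_pair_or_of_adj [Finite V] {a b v z : V}
    (hPab : HasPMOn G ({a, b} : Set V)ᶜ) (hPvz : HasPMOn G ({v, z} : Set V)ᶜ) (haz : G.Adj a z)
    (hne : a ≠ b) (hva : v ≠ a) (hvb : v ≠ b) (hzb : z ≠ b) :
    HasPMOn G ({v, b} : Set V)ᶜ ∨ HasPMOn G ({v, a} : Set V)ᶜ := by
  obtain ⟨Φ, hΦ, hΦe⟩ := hasPMOn_compl_iff.mp hPab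
  obtain ⟨N, hN, hNe⟩ := hasPMOn_compl_iff.mp hPvz
  obtain ⟨t, htv, ht, W, hW, hWe⟩ :=
    exists_isMatchingSet_exposedSet_symmDiff hΦ hN (v := v) (by simp [hNe])
      (by simp [hΦe, hva, hvb])
  rw [hΦe, hNe] at ht
  rw [hΦe] at hWe
  simp only [Set.mem_union, Set.mem_insert_iff, Set.mem_singleton_iff] at ht
  rcases ht with (rfl | rfl) | (rfl | rfl)
  · refine Or.inl (hasPMOn_compl_iff.mpr ⟨W, hW, ?_⟩)
    rw [hWe]
    ext x
    simp only [Set.mem_symmDiff, Set.mem_insert_iff, Set.mem_singleton_iff]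
    grind
  · refine Or.inr (hasPMOn_compl_iff.mpr ⟨W, hW, ?_⟩)
    rw [hWe]
    ext x
    simp only [Set.mem_symmDiff, Set.mem_insert_iff, Set.mem_singleton_iff]
    grind
  · exact absurd rfl htv
  · have ha : a ∈ exposedSet W := by rw [hWe]; simp [Set.mem_symmDiff, hva.symm, haz.ne]
    have ht : t ∈ exposedSet W := by rw [hWe]; simp [Set.mem_symmDiff, haz.ne', hzb]
    refine Or.inl (hasPMOn_compl_iff.mpr ⟨_, hW.insert haz ha ht, ?_⟩)
    rw [exposedSet_insert, hWe]
    ext x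
    simp only [Set.mem_symmDiff, Set.mem_insert_iff, Set.mem_singleton_iff, Set.mem_sdiff,
      Set.mem_ofPred_eq, Sym2.mem_iff]
    grind

end Exchange

section SimRel

variable {G : SimpleGraph V}

theorem exists_hasPMOn_compl_pair_of_walk [Finite V] {x v : V}
    (p : (allowedSubgraph G).Walk x v) (hxv : x ≠ v) :
    ∃ z ≠ v, (z = x ∨ G.Adj x z) ∧ HasPMOn G ({v, z} : Set V)ᶜ := by
  induction p with
  | nil => exact absurd rfl hxv
  | @cons a m v hadj _ ih =>
    obtain ⟨ham, hallowed⟩ := hadj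
    have hPam : HasPMOn G ({m, a} : Set V)ᶜ := Set.pair_comm a m ▸ hallowed.hasPMOn_compl_pair
    by_cases hmv : m = v
    · subst hmv
      exact ⟨a, hxv, Or.inl rfl, hPam⟩
    obtain ⟨z, hzv, rfl | hmz, hPz⟩ := ih hmv
    · exact ⟨z, hzv, Or.inr ham, hPz⟩
    by_cases hza : z = a
    · subst hza
      exact ⟨z, hzv, Or.inl rfl, hPz⟩
    rcases hasPMOn_compl_pair_or_of_adj hPam hPz hmz ham.ne' (Ne.symm hmv) (Ne.symm hxv) hza
      with h | h
    · exact ⟨a, hxv, Or.inl rfl, h⟩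
    · exact ⟨m, hmv, Or.inr ham, h⟩

lemma SimRel.symm {u v : V} (h : SimRel G u v) : SimRel G v u := by
  rcases h with rfl | h
  · exact Or.inl rfl
  · exact Or.inr (Set.pair_comm u v ▸ h)

theorem SimRel.trans_of_reachable [Finite V] {u v w : V} (huv : SimRel G u v)
    (hvw : SimRel G v w) (hreach : (allowedSubgraph G).Reachable u v) : SimRel G u w := by
  rcases eq_or_ne u v with rfl | huv'
  · exact hvw
  rcases eq_or_ne v w with rfl | hvw'
  · exact huv
  have hPuv : ¬ HasPMOn G ({v, u} : Set V)ᶜ := Set.pair_comm u v ▸ huv.resolve_left huv'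
  have hPvw : ¬ HasPMOn G ({v, w} : Set V)ᶜ := hvw.resolve_left hvw'
  refine or_iff_not_imp_left.mpr fun huw hPuw => ?_
  obtain ⟨p⟩ := hreach
  obtain ⟨z, hzv, rfl | huz, hPz⟩ := exists_hasPMOn_compl_pair_of_walk p huv'
  · exact hPuv hPz
  rcases eq_or_ne z w with rfl | hzw
  · exact hPvw hPz
  rcases hasPMOn_compl_pair_or_of_adj hPuw hPz huz huw (Ne.symm huv') hvw' hzw with h | h
  exacts [hPvw h, hPuv h]

end SimRel

theorem statement_12_general {V : Type*} [Fintype V] (G : SimpleGraph V)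
    (C : Set V) (hC : IsFactorComponent G C) :
    (∀ u ∈ C, SimRel G u u) ∧
    (∀ u ∈ C, ∀ v ∈ C, SimRel G u v → SimRel G v u) ∧
    (∀ u ∈ C, ∀ v ∈ C, ∀ w ∈ C, SimRel G u v → SimRel G v w → SimRel G u w) := by
  obtain ⟨c, rfl⟩ := hC
  exact ⟨fun u _ => Or.inl rfl, fun u _ v _ => SimRel.symm,
    fun u hu v hv w _ huv hvw => huv.trans_of_reachable hvw (c.reachable_of_mem_supp hu hv)⟩

/-- Let `G` be a factorizable finite simple graph and `H` a
factor-component of `G`. The relation `u ∼ v` iff `u = v` or `G − u − v` has no perfect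
matching is an equivalence relation on `V(H)`. -/
theorem statement_12 {V : Type*} [Fintype V] (G : SimpleGraph V) (hG : Factorizable G)
    (C : Set V) (hC : IsFactorComponent G C) :
    (∀ u ∈ C, SimRel G u u) ∧
    (∀ u ∈ C, ∀ v ∈ C, SimRel G u v → SimRel G v u) ∧
    (∀ u ∈ C, ∀ v ∈ C, ∀ w ∈ C, SimRel G u v → SimRel G v w → SimRel G u w) :=
  statement_12_general G C hC
end
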